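/- arXiv:2301.05162 — 3 statements merged into one kernel-verified Lean document; each statement's English description precedes it below -/
import Mathlib

section
/- Let V be a cocomplete duoidal category and M a small monoidal category. If S, T : M^op × M → V are lax monoidal functors (with respect to the componentwise ⊕ structure on M^op × M and (V, *, J)), then the functor S ∘̂ T : M^op × M → V defined by the coend (S ∘̂ T)(a,c) = ∫^b T(a,b) ∘ S(b,c) is lax monoidal, with unit coherence J → Δ→ J ∘ J → (η_S ∘ η_T) → T(e,e) ∘ S(e,e) → ∫^b T(e,b) ∘ S(b,e), and multiplication obtained from ζ followed by μ_T ∘ μ_S and the canonical coend map. -/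
set_option linter.unusedVariables false
open CategoryTheory CategoryTheory.Limits MonoidalCategory

universe w v u v₁ u₁ v₂ u₂ v₃ u₃

/-- The data of a monoidal structure on a category (tensor, unit, structural morphisms). -/
structure MonStrData (V : Type u) [Category.{v} V] where
  t : V → V → V
  tHom : ∀ {X₁ Y₁ X₂ Y₂ : V}, (X₁ ⟶ Y₁) → (X₂ ⟶ Y₂) → (t X₁ X₂ ⟶ t Y₁ Y₂)
  unit : V
  aHom : ∀ X Y Z : V, t (t X Y) Z ⟶ t X (t Y Z)
  aInv : ∀ X Y Z : V, t X (t Y Z) ⟶ t (t X Y) Z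
  lHom : ∀ X : V, t unit X ⟶ X
  lInv : ∀ X : V, X ⟶ t unit X
  rHom : ∀ X : V, t X unit ⟶ X
  rInv : ∀ X : V, X ⟶ t X unit

/-- The data of a monoidal structure is an actual monoidal structure. -/
structure IsMonStr {V : Type u} [Category.{v} V] (m : MonStrData V) : Prop where
  tHom_id : ∀ X Y : V, m.tHom (𝟙 X) (𝟙 Y) = 𝟙 (m.t X Y)
  tHom_comp : ∀ {X₁ Y₁ Z₁ X₂ Y₂ Z₂ : V} (f₁ : X₁ ⟶ Y₁) (g₁ : Y₁ ⟶ Z₁) (f₂ : X₂ ⟶ Y₂)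
    (g₂ : Y₂ ⟶ Z₂), m.tHom (f₁ ≫ g₁) (f₂ ≫ g₂) = m.tHom f₁ f₂ ≫ m.tHom g₁ g₂
  a_hom_inv : ∀ X Y Z : V, m.aHom X Y Z ≫ m.aInv X Y Z = 𝟙 _
  a_inv_hom : ∀ X Y Z : V, m.aInv X Y Z ≫ m.aHom X Y Z = 𝟙 _
  a_nat : ∀ {X₁ Y₁ X₂ Y₂ X₃ Y₃ : V} (f₁ : X₁ ⟶ Y₁) (f₂ : X₂ ⟶ Y₂) (f₃ : X₃ ⟶ Y₃),
    m.tHom (m.tHom f₁ f₂) f₃ ≫ m.aHom Y₁ Y₂ Y₃ = m.aHom X₁ X₂ X₃ ≫ m.tHom f₁ (m.tHom f₂ f₃)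
  l_hom_inv : ∀ X : V, m.lHom X ≫ m.lInv X = 𝟙 _
  l_inv_hom : ∀ X : V, m.lInv X ≫ m.lHom X = 𝟙 _
  l_nat : ∀ {X Y : V} (f : X ⟶ Y), m.tHom (𝟙 m.unit) f ≫ m.lHom Y = m.lHom X ≫ f
  r_hom_inv : ∀ X : V, m.rHom X ≫ m.rInv X = 𝟙 _
  r_inv_hom : ∀ X : V, m.rInv X ≫ m.rHom X = 𝟙 _
  r_nat : ∀ {X Y : V} (f : X ⟶ Y), m.tHom f (𝟙 m.unit) ≫ m.rHom Y = m.rHom X ≫ f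
  triangle : ∀ X Y : V,
    m.aHom X m.unit Y ≫ m.tHom (𝟙 X) (m.lHom Y) = m.tHom (m.rHom X) (𝟙 Y)
  pentagon : ∀ W X Y Z : V,
    m.tHom (m.aHom W X Y) (𝟙 Z) ≫ m.aHom W (m.t X Y) Z ≫ m.tHom (𝟙 W) (m.aHom X Y Z)
      = m.aHom (m.t W X) Y Z ≫ m.aHom W X (m.t Y Z)

/-- The data of a duoidal category structure: a "parallel" monoidal structure `p = (∗, J)`,
a "sequential" monoidal structure `s = (∘, I)`, the interchange `ζ`, and `Δ`, `∇`, `ε`. -/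
structure DuoidalData (V : Type u) [Category.{v} V] where
  p : MonStrData V
  s : MonStrData V
  zeta : ∀ A B C D : V, p.t (s.t A B) (s.t C D) ⟶ s.t (p.t A C) (p.t B D)
  delta : p.unit ⟶ s.t p.unit p.unit
  nabla : p.t s.unit s.unit ⟶ s.unit
  eps : p.unit ⟶ s.unit

/-- The data of a duoidal structure is an actual duoidal category structure. -/
structure IsDuoidal {V : Type u} [Category.{v} V] (d : DuoidalData V) : Prop where
  p_mon : IsMonStr d.p
  s_mon : IsMonStr d.s
  zeta_nat : ∀ {A A' B B' C C' D D' : V} (f : A ⟶ A') (g : B ⟶ B') (h : C ⟶ C') (k : D ⟶ D'),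
    d.p.tHom (d.s.tHom f g) (d.s.tHom h k) ≫ d.zeta A' B' C' D'
      = d.zeta A B C D ≫ d.s.tHom (d.p.tHom f h) (d.p.tHom g k)
  -- (I, ∇, ε) is a monoid in (V, ∗, J)
  nabla_assoc : d.p.tHom d.nabla (𝟙 d.s.unit) ≫ d.nabla
      = d.p.aHom d.s.unit d.s.unit d.s.unit ≫ d.p.tHom (𝟙 d.s.unit) d.nabla ≫ d.nabla
  nabla_eps_left : d.p.tHom d.eps (𝟙 d.s.unit) ≫ d.nabla = d.p.lHom d.s.unit
  nabla_eps_right : d.p.tHom (𝟙 d.s.unit) d.eps ≫ d.nabla = d.p.rHom d.s.unit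
  -- (J, Δ, ε) is a comonoid in (V, ∘, I)
  delta_coassoc : d.delta ≫ d.s.tHom d.delta (𝟙 d.p.unit) ≫ d.s.aHom d.p.unit d.p.unit d.p.unit
      = d.delta ≫ d.s.tHom (𝟙 d.p.unit) d.delta
  delta_eps_left : d.delta ≫ d.s.tHom d.eps (𝟙 d.p.unit) ≫ d.s.lHom d.p.unit = 𝟙 d.p.unit
  delta_eps_right : d.delta ≫ d.s.tHom (𝟙 d.p.unit) d.eps ≫ d.s.rHom d.p.unit = 𝟙 d.p.unit
  -- compatibility of ζ with the associator of ∗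
  hexagon_p : ∀ A B C D E F : V,
    d.p.tHom (d.zeta A B C D) (𝟙 (d.s.t E F)) ≫ d.zeta (d.p.t A C) (d.p.t B D) E F
        ≫ d.s.tHom (d.p.aHom A C E) (d.p.aHom B D F)
      = d.p.aHom (d.s.t A B) (d.s.t C D) (d.s.t E F) ≫ d.p.tHom (𝟙 (d.s.t A B)) (d.zeta C D E F)
        ≫ d.zeta A B (d.p.t C E) (d.p.t D F)
  -- compatibility of ζ with the associator of ∘
  hexagon_s : ∀ A B C D E F : V,
    d.zeta (d.s.t A B) C (d.s.t D E) F ≫ d.s.tHom (d.zeta A B D E) (𝟙 (d.p.t C F))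
        ≫ d.s.aHom (d.p.t A D) (d.p.t B E) (d.p.t C F)
      = d.p.tHom (d.s.aHom A B C) (d.s.aHom D E F) ≫ d.zeta A (d.s.t B C) D (d.s.t E F)
        ≫ d.s.tHom (𝟙 (d.p.t A D)) (d.zeta B C E F)
  -- compatibility of ζ with the unitors of ∗ via Δ
  unit_p_left : ∀ A B : V,
    d.p.tHom d.delta (𝟙 (d.s.t A B)) ≫ d.zeta d.p.unit d.p.unit A B
        ≫ d.s.tHom (d.p.lHom A) (d.p.lHom B)
      = d.p.lHom (d.s.t A B)
  unit_p_right : ∀ A B : V,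
    d.p.tHom (𝟙 (d.s.t A B)) d.delta ≫ d.zeta A B d.p.unit d.p.unit
        ≫ d.s.tHom (d.p.rHom A) (d.p.rHom B)
      = d.p.rHom (d.s.t A B)
  -- compatibility of ζ with the unitors of ∘ via ∇
  unit_s_left : ∀ A B : V,
    d.zeta d.s.unit A d.s.unit B ≫ d.s.tHom d.nabla (𝟙 (d.p.t A B)) ≫ d.s.lHom (d.p.t A B)
      = d.p.tHom (d.s.lHom A) (d.s.lHom B)
  unit_s_right : ∀ A B : V,
    d.zeta A d.s.unit B d.s.unit ≫ d.s.tHom (𝟙 (d.p.t A B)) d.nabla ≫ d.s.rHom (d.p.t A B)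
      = d.p.tHom (d.s.rHom A) (d.s.rHom B)

/-- The data of a lax monoidal functor `M^op × M → (V, m)` (with `M^op × M` monoidal
componentwise via `⊕`). -/
structure LaxMonData {V : Type u₁} [Category.{v₁} V] (m : MonStrData V)
    (M : Type u₂) [Category.{v₂} M] [MonoidalCategory M] where
  obj : M → M → V
  map : ∀ {a a' b b' : M}, (a' ⟶ a) → (b ⟶ b') → (obj a b ⟶ obj a' b')
  η : m.unit ⟶ obj (𝟙_ M) (𝟙_ M)
  μ : ∀ a₁ b₁ a₂ b₂ : M, m.t (obj a₁ b₁) (obj a₂ b₂) ⟶ obj (a₁ ⊗ a₂) (b₁ ⊗ b₂)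

/-- The data of a lax monoidal functor is an actual lax monoidal functor. -/
structure IsLaxMon {V : Type u₁} [Category.{v₁} V] {m : MonStrData V}
    {M : Type u₂} [Category.{v₂} M] [MonoidalCategory M] (S : LaxMonData m M) : Prop where
  map_id : ∀ a b : M, S.map (𝟙 a) (𝟙 b) = 𝟙 (S.obj a b)
  map_comp : ∀ {a a' a'' b b' b'' : M} (f : a' ⟶ a) (f' : a'' ⟶ a') (g : b ⟶ b')
    (g' : b' ⟶ b''), S.map (f' ≫ f) (g ≫ g') = S.map f g ≫ S.map f' g'
  μ_nat : ∀ {a₁ a₁' b₁ b₁' a₂ a₂' b₂ b₂' : M}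
    (f₁ : a₁' ⟶ a₁) (g₁ : b₁ ⟶ b₁') (f₂ : a₂' ⟶ a₂) (g₂ : b₂ ⟶ b₂'),
    m.tHom (S.map f₁ g₁) (S.map f₂ g₂) ≫ S.μ a₁' b₁' a₂' b₂'
      = S.μ a₁ b₁ a₂ b₂ ≫ S.map (f₁ ⊗ₘ f₂) (g₁ ⊗ₘ g₂)
  assoc : ∀ a₁ b₁ a₂ b₂ a₃ b₃ : M,
    m.tHom (S.μ a₁ b₁ a₂ b₂) (𝟙 (S.obj a₃ b₃)) ≫ S.μ (a₁ ⊗ a₂) (b₁ ⊗ b₂) a₃ b₃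
        ≫ S.map (α_ a₁ a₂ a₃).inv (α_ b₁ b₂ b₃).hom
      = m.aHom (S.obj a₁ b₁) (S.obj a₂ b₂) (S.obj a₃ b₃)
          ≫ m.tHom (𝟙 (S.obj a₁ b₁)) (S.μ a₂ b₂ a₃ b₃) ≫ S.μ a₁ b₁ (a₂ ⊗ a₃) (b₂ ⊗ b₃)
  left_unit : ∀ a b : M,
    m.tHom S.η (𝟙 (S.obj a b)) ≫ S.μ (𝟙_ M) (𝟙_ M) a b ≫ S.map (λ_ a).inv (λ_ b).hom
      = m.lHom (S.obj a b)
  right_unit : ∀ a b : M,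
    m.tHom (𝟙 (S.obj a b)) S.η ≫ S.μ a b (𝟙_ M) (𝟙_ M) ≫ S.map (ρ_ a).inv (ρ_ b).hom
      = m.rHom (S.obj a b)

/-- The tensoring-on-the-left functor of a monoidal structure. -/
def tLeft {V : Type u₁} [Category.{v₁} V] (m : MonStrData V) (hm : IsMonStr m)
    (X : V) : V ⥤ V where
  obj Y := m.t X Y
  map f := m.tHom (𝟙 X) f
  map_id := fun Y => hm.tHom_id X Y
  map_comp := by intro Y Z W f g; (try dsimp only); rw [← hm.tHom_comp]; simp

/-- The tensoring-on-the-right functor of a monoidal structure. -/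
def tRight {V : Type u₁} [Category.{v₁} V] (m : MonStrData V) (hm : IsMonStr m)
    (X : V) : V ⥤ V where
  obj Y := m.t Y X
  map f := m.tHom f (𝟙 X)
  map_id := fun Y => hm.tHom_id Y X
  map_comp := by intro Y Z W f g; (try dsimp only); rw [← hm.tHom_comp]; simp

section Cocomplete

open CategoryTheory.Limits

variable {V : Type u₁} [Category.{v₁} V] [HasColimits V]
variable {M : Type v₁} [Category.{v₁} M] [MonoidalCategory M]

/-- The object part of `hom̲_M(a,b) = ∐_{σ ∈ M(a,b)} I`. -/
noncomputable def ehomObj (d : DuoidalData V) (a b : M) : V :=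
  ∐ fun _ : (a ⟶ b) => d.s.unit

/-- The functorial action of `hom̲_M`, by reindexing along pre- and post-composition. -/
noncomputable def ehomMap (d : DuoidalData V) {a a' b b' : M} (f : a' ⟶ a)
    (g : b ⟶ b') : ehomObj d a b ⟶ ehomObj d a' b' :=
  Sigma.desc fun σ => Sigma.ι (fun _ : (a' ⟶ b') => d.s.unit) (f ≫ σ ≫ g)

/-- The coend `∫^b H(b,b)` of raw bifunctor data `H` (contravariant in the first
variable), as a coequalizer of coproducts. -/
noncomputable def coendObj (Hobj : M → M → V)
    (Hmap : ∀ {x x' y y' : M}, (x' ⟶ x) → (y ⟶ y') → (Hobj x y ⟶ Hobj x' y')) : V :=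
  coequalizer
    (Sigma.desc fun p : (Σ x y : M, x ⟶ y) =>
      (Hmap p.2.2 (𝟙 p.1) ≫ Sigma.ι (fun b : M => Hobj b b) p.1 :
        Hobj p.2.1 p.1 ⟶ ∐ fun b : M => Hobj b b))
    (Sigma.desc fun p : (Σ x y : M, x ⟶ y) =>
      Hmap (𝟙 p.2.1) p.2.2 ≫ Sigma.ι (fun b : M => Hobj b b) p.2.1)

/-- The coprojection into the coend. -/
noncomputable def coendPr (Hobj : M → M → V)
    (Hmap : ∀ {x x' y y' : M}, (x' ⟶ x) → (y ⟶ y') → (Hobj x y ⟶ Hobj x' y'))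
    (b : M) : Hobj b b ⟶ coendObj Hobj Hmap :=
  Sigma.ι (fun b : M => Hobj b b) b ≫ coequalizer.π _ _

/-- The object part of the composition product
`(S ∘̂ T)(a,c) = ∫^b T(a,b) ∘ S(b,c)`. -/
noncomputable def compObj (d : DuoidalData V) (S T : LaxMonData d.p M) (a c : M) : V :=
  coendObj (fun x y => d.s.t (T.obj a y) (S.obj x c))
    (fun f g => d.s.tHom (T.map (𝟙 a) g) (S.map f (𝟙 c)))

/-- The coprojection `T(a,b) ∘ S(b,c) ⟶ (S ∘̂ T)(a,c)`. -/
noncomputable def compPr (d : DuoidalData V) (S T : LaxMonData d.p M) (a c b : M) :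
    d.s.t (T.obj a b) (S.obj b c) ⟶ compObj d S T a c :=
  coendPr (fun x y => d.s.t (T.obj a y) (S.obj x c))
    (fun f g => d.s.tHom (T.map (𝟙 a) g) (S.map f (𝟙 c))) b

end Cocomplete

section Machinery

open CategoryTheory.Limits

set_option linter.unusedSectionVars false

variable {V : Type u₁} [Category.{v₁} V] [HasColimits V]

variable {M : Type v₁} [Category.{v₁} M]

/-- General tensor-hom helper lemmas. -/
lemma tHom_left_right {m : MonStrData V} (hm : IsMonStr m) {A B C D : V}
    (f : A ⟶ B) (g : C ⟶ D) : m.tHom f (𝟙 C) ≫ m.tHom (𝟙 B) g = m.tHom f g := by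
  rw [← hm.tHom_comp]; simp

lemma tHom_right_left {m : MonStrData V} (hm : IsMonStr m) {A B C D : V}
    (f : A ⟶ B) (g : C ⟶ D) : m.tHom (𝟙 A) g ≫ m.tHom f (𝟙 D) = m.tHom f g := by
  rw [← hm.tHom_comp]; simp

section CoendStuff

variable (Hobj : M → M → V)
variable (Hmap : ∀ {x x' y y' : M}, (x' ⟶ x) → (y ⟶ y') → (Hobj x y ⟶ Hobj x' y'))

/-- The left leg of the coequalizer defining the coend. -/
noncomputable def coendL :
    (∐ fun p : (Σ x y : M, x ⟶ y) => Hobj p.2.1 p.1) ⟶ (∐ fun b : M => Hobj b b) :=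
  Sigma.desc fun p : (Σ x y : M, x ⟶ y) =>
    (Hmap p.2.2 (𝟙 p.1) ≫ Sigma.ι (fun b : M => Hobj b b) p.1)

/-- The right leg of the coequalizer defining the coend. -/
noncomputable def coendR :
    (∐ fun p : (Σ x y : M, x ⟶ y) => Hobj p.2.1 p.1) ⟶ (∐ fun b : M => Hobj b b) :=
  Sigma.desc fun p : (Σ x y : M, x ⟶ y) =>
    Hmap (𝟙 p.2.1) p.2.2 ≫ Sigma.ι (fun b : M => Hobj b b) p.2.1

lemma coendObj_eq : coendObj Hobj @Hmap = coequalizer (coendL Hobj @Hmap) (coendR Hobj @Hmap) :=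
  rfl

lemma coendPr_eq (b : M) :
    coendPr Hobj @Hmap b
      = Sigma.ι (fun b : M => Hobj b b) b ≫ coequalizer.π (coendL Hobj @Hmap) (coendR Hobj @Hmap) :=
  rfl

/-- The coend (cowedge) relation. -/
lemma coend_rel {x y : M} (σ : x ⟶ y) :
    Hmap σ (𝟙 x) ≫ coendPr Hobj @Hmap x = Hmap (𝟙 y) σ ≫ coendPr Hobj @Hmap y := by
  have h := coequalizer.condition (coendL Hobj @Hmap) (coendR Hobj @Hmap)
  have h2 := Sigma.ι (fun p : (Σ x y : M, x ⟶ y) => Hobj p.2.1 p.1) ⟨x, y, σ⟩ ≫= h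
  rw [coendPr_eq, coendPr_eq]
  simp [coendL, coendR] at h2
  exact h2

variable (F : V ⥤ V) [PreservesColimits F]

/-- Descent out of the image of a coend under a colimit-preserving functor. -/
noncomputable def coendDesc {Z : V} (g : ∀ b : M, F.obj (Hobj b b) ⟶ Z)
    (w : ∀ {x y : M} (σ : x ⟶ y),
      F.map (Hmap σ (𝟙 x)) ≫ g x = F.map (Hmap (𝟙 y) σ) ≫ g y) :
    F.obj (coendObj Hobj @Hmap) ⟶ Z := by
  refine (PreservesCoequalizer.iso F (coendL Hobj @Hmap) (coendR Hobj @Hmap)).inv ≫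
    coequalizer.desc (inv (sigmaComparison F (fun b : M => Hobj b b)) ≫ Sigma.desc g) ?_
  rw [← cancel_epi (sigmaComparison F (fun p : (Σ x y : M, x ⟶ y) => Hobj p.2.1 p.1))]
  ext p
  obtain ⟨x, y, σ⟩ := p
  have hx : F.map (Sigma.ι (fun b : M => Hobj b b) x) ≫
      inv (sigmaComparison F (fun b : M => Hobj b b)) = Sigma.ι (fun b : M => F.obj (Hobj b b)) x := by
    rw [← ι_comp_sigmaComparison F (fun b : M => Hobj b b) x]; simp
  have hy : F.map (Sigma.ι (fun b : M => Hobj b b) y) ≫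
      inv (sigmaComparison F (fun b : M => Hobj b b)) = Sigma.ι (fun b : M => F.obj (Hobj b b)) y := by
    rw [← ι_comp_sigmaComparison F (fun b : M => Hobj b b) y]; simp
  have hl : Sigma.ι (fun p : (Σ x y : M, x ⟶ y) => Hobj p.2.1 p.1) ⟨x, y, σ⟩ ≫
      coendL Hobj @Hmap = Hmap σ (𝟙 x) ≫ Sigma.ι (fun b : M => Hobj b b) x := by
    simp [coendL]
  have hr : Sigma.ι (fun p : (Σ x y : M, x ⟶ y) => Hobj p.2.1 p.1) ⟨x, y, σ⟩ ≫
      coendR Hobj @Hmap = Hmap (𝟙 y) σ ≫ Sigma.ι (fun b : M => Hobj b b) y := by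
    simp [coendR]
  calc Sigma.ι _ ⟨x, y, σ⟩ ≫ sigmaComparison F _ ≫ F.map (coendL Hobj @Hmap) ≫
        inv (sigmaComparison F (fun b : M => Hobj b b)) ≫ Sigma.desc g
      = (F.map (Sigma.ι (fun p : (Σ x y : M, x ⟶ y) => Hobj p.2.1 p.1) ⟨x, y, σ⟩) ≫
          F.map (coendL Hobj @Hmap)) ≫ inv (sigmaComparison F (fun b : M => Hobj b b)) ≫
          Sigma.desc g := by
        rw [ι_comp_sigmaComparison_assoc]; simp
    _ = F.map (Hmap σ (𝟙 x)) ≫ (F.map (Sigma.ι (fun b : M => Hobj b b) x) ≫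
          inv (sigmaComparison F (fun b : M => Hobj b b))) ≫ Sigma.desc g := by
        rw [← F.map_comp, hl, F.map_comp]; simp
    _ = F.map (Hmap σ (𝟙 x)) ≫ g x := by rw [hx]; simp
    _ = F.map (Hmap (𝟙 y) σ) ≫ g y := w σ
    _ = F.map (Hmap (𝟙 y) σ) ≫ (F.map (Sigma.ι (fun b : M => Hobj b b) y) ≫
          inv (sigmaComparison F (fun b : M => Hobj b b))) ≫ Sigma.desc g := by rw [hy]; simp
    _ = Sigma.ι _ ⟨x, y, σ⟩ ≫ sigmaComparison F _ ≫ F.map (coendR Hobj @Hmap) ≫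
          inv (sigmaComparison F (fun b : M => Hobj b b)) ≫ Sigma.desc g := by
        rw [ι_comp_sigmaComparison_assoc, ← F.map_comp_assoc, hr, F.map_comp]; simp

lemma coendDesc_fac {Z : V} (g : ∀ b : M, F.obj (Hobj b b) ⟶ Z)
    (w : ∀ {x y : M} (σ : x ⟶ y),
      F.map (Hmap σ (𝟙 x)) ≫ g x = F.map (Hmap (𝟙 y) σ) ≫ g y) (b : M) :
    F.map (coendPr Hobj @Hmap b) ≫ coendDesc Hobj @Hmap F g @w = g b := by
  rw [coendDesc, coendPr_eq]
  erw [F.map_comp]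
  rw [Category.assoc]
  erw [map_π_preserves_coequalizer_inv_desc]
  have hb : F.map (Sigma.ι (fun b : M => Hobj b b) b) ≫
      inv (sigmaComparison F (fun b : M => Hobj b b)) = Sigma.ι (fun b : M => F.obj (Hobj b b)) b := by
    rw [← ι_comp_sigmaComparison F (fun b : M => Hobj b b) b]; simp
  rw [← Category.assoc, hb]; simp

lemma coend_hom_ext {Z : V} {h k : F.obj (coendObj Hobj @Hmap) ⟶ Z}
    (w : ∀ b : M, F.map (coendPr Hobj @Hmap b) ≫ h = F.map (coendPr Hobj @Hmap b) ≫ k) :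
    h = k := by
  have : Epi (F.map (coequalizer.π (coendL Hobj @Hmap) (coendR Hobj @Hmap))) :=
    map_π_epi F _ _
  apply (cancel_epi (F.map (coequalizer.π (coendL Hobj @Hmap) (coendR Hobj @Hmap)))).1
  rw [← cancel_epi (sigmaComparison F (fun b : M => Hobj b b))]
  ext b
  rw [ι_comp_sigmaComparison_assoc, ι_comp_sigmaComparison_assoc]
  erw [← F.map_comp_assoc, ← F.map_comp_assoc]
  exact w b

end CoendStuff

end Machinery

section CompLax

set_option linter.unusedSectionVars false
open CategoryTheory.Limits

variable {V : Type u₁} [Category.{v₁} V] [HasColimits V]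
variable {M : Type v₁} [Category.{v₁} M] [MonoidalCategory M]

/-- `compDesc`: descent out of the image of the composition coend. -/
noncomputable def compDesc (d : DuoidalData V) (S T : LaxMonData d.p M)
    (F : V ⥤ V) [PreservesColimits F] (a c : M) {Z : V}
    (g : ∀ b : M, F.obj (d.s.t (T.obj a b) (S.obj b c)) ⟶ Z)
    (w : ∀ {x y : M} (σ : x ⟶ y),
      F.map (d.s.tHom (T.map (𝟙 a) (𝟙 x)) (S.map σ (𝟙 c))) ≫ g x
        = F.map (d.s.tHom (T.map (𝟙 a) σ) (S.map (𝟙 y) (𝟙 c))) ≫ g y) :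
    F.obj (compObj d S T a c) ⟶ Z :=
  coendDesc (fun x y => d.s.t (T.obj a y) (S.obj x c))
    (fun {x x' y y'} f g' => d.s.tHom (T.map (𝟙 a) g') (S.map f (𝟙 c))) F g @w

lemma compDesc_fac (d : DuoidalData V) (S T : LaxMonData d.p M)
    (F : V ⥤ V) [PreservesColimits F] (a c : M) {Z : V}
    (g : ∀ b : M, F.obj (d.s.t (T.obj a b) (S.obj b c)) ⟶ Z)
    (w : ∀ {x y : M} (σ : x ⟶ y),
      F.map (d.s.tHom (T.map (𝟙 a) (𝟙 x)) (S.map σ (𝟙 c))) ≫ g x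
        = F.map (d.s.tHom (T.map (𝟙 a) σ) (S.map (𝟙 y) (𝟙 c))) ≫ g y) (b : M) :
    F.map (compPr d S T a c b) ≫ compDesc d S T F a c g @w = g b :=
  coendDesc_fac (fun x y => d.s.t (T.obj a y) (S.obj x c))
    (fun {x x' y y'} f g' => d.s.tHom (T.map (𝟙 a) g') (S.map f (𝟙 c))) F g @w b

lemma comp_hom_ext (d : DuoidalData V) (S T : LaxMonData d.p M)
    (F : V ⥤ V) [PreservesColimits F] (a c : M) {Z : V}
    {h k : F.obj (compObj d S T a c) ⟶ Z}
    (w : ∀ b : M, F.map (compPr d S T a c b) ≫ h = F.map (compPr d S T a c b) ≫ k) :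
    h = k :=
  coend_hom_ext (fun x y => d.s.t (T.obj a y) (S.obj x c))
    (fun {x x' y y'} f g' => d.s.tHom (T.map (𝟙 a) g') (S.map f (𝟙 c))) F w

/-- The coend (cowedge) relation for the composition coend. -/
lemma compPr_rel (d : DuoidalData V) (S T : LaxMonData d.p M) (a c : M)
    {x y : M} (σ : x ⟶ y) :
    d.s.tHom (T.map (𝟙 a) (𝟙 x)) (S.map σ (𝟙 c)) ≫ compPr d S T a c x
      = d.s.tHom (T.map (𝟙 a) σ) (S.map (𝟙 y) (𝟙 c)) ≫ compPr d S T a c y :=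
  coend_rel (fun x y => d.s.t (T.obj a y) (S.obj x c))
    (fun {x x' y y'} f g' => d.s.tHom (T.map (𝟙 a) g') (S.map f (𝟙 c))) σ

/-- The workhorse form of the coend relation. -/
lemma compPr_shift (d : DuoidalData V) (hd : IsDuoidal d) (S T : LaxMonData d.p M)
    (hS : IsLaxMon S) (hT : IsLaxMon T) (a c : M) {x y : M} (σ : x ⟶ y)
    {W₁ W₂ : V} (u : W₁ ⟶ T.obj a x) (v : W₂ ⟶ S.obj y c) :
    d.s.tHom u (v ≫ S.map σ (𝟙 c)) ≫ compPr d S T a c x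
      = d.s.tHom (u ≫ T.map (𝟙 a) σ) v ≫ compPr d S T a c y := by
  have h1 : d.s.tHom u (v ≫ S.map σ (𝟙 c))
      = d.s.tHom u v ≫ d.s.tHom (T.map (𝟙 a) (𝟙 x)) (S.map σ (𝟙 c)) := by
    rw [← hd.s_mon.tHom_comp, hT.map_id]; simp
  have h2 : d.s.tHom (u ≫ T.map (𝟙 a) σ) v
      = d.s.tHom u v ≫ d.s.tHom (T.map (𝟙 a) σ) (S.map (𝟙 y) (𝟙 c)) := by
    rw [← hd.s_mon.tHom_comp, hS.map_id]; simp
  rw [h1, h2, Category.assoc, Category.assoc, compPr_rel d S T a c σ]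

lemma tHom4 (d : DuoidalData V) (hd : IsDuoidal d) (S T : LaxMonData d.p M)
    (hS : IsLaxMon S) (hT : IsLaxMon T) {a a' a'' b b' b'' x x' x'' y y' y'' : M}
    (f : a' ⟶ a) (f' : a'' ⟶ a') (g : b ⟶ b') (g' : b' ⟶ b'')
    (h : x' ⟶ x) (h' : x'' ⟶ x') (k : y ⟶ y') (k' : y' ⟶ y'') :
    d.s.tHom (T.map f g) (S.map h k) ≫ d.s.tHom (T.map f' g') (S.map h' k')
      = d.s.tHom (T.map (f' ≫ f) (g ≫ g')) (S.map (h' ≫ h) (k ≫ k')) := by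
  rw [hT.map_comp, hS.map_comp, hd.s_mon.tHom_comp]

lemma zeta_push_right (d : DuoidalData V) (hd : IsDuoidal d) {A B C C' D D' : V}
    (h : C ⟶ C') (k : D ⟶ D') :
    d.p.tHom (𝟙 (d.s.t A B)) (d.s.tHom h k) ≫ d.zeta A B C' D'
      = d.zeta A B C D ≫ d.s.tHom (d.p.tHom (𝟙 A) h) (d.p.tHom (𝟙 B) k) := by
  have := hd.zeta_nat (𝟙 A) (𝟙 B) h k
  rwa [hd.s_mon.tHom_id] at this

lemma zeta_push_left (d : DuoidalData V) (hd : IsDuoidal d) {A A' B B' C D : V}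
    (f : A ⟶ A') (g : B ⟶ B') :
    d.p.tHom (d.s.tHom f g) (𝟙 (d.s.t C D)) ≫ d.zeta A' B' C D
      = d.zeta A B C D ≫ d.s.tHom (d.p.tHom f (𝟙 C)) (d.p.tHom g (𝟙 D)) := by
  have := hd.zeta_nat f g (𝟙 C) (𝟙 D)
  rwa [hd.s_mon.tHom_id] at this

lemma μ_push_right (d : DuoidalData V) {R : LaxMonData d.p M} (hR : IsLaxMon R)
    (a₁ b₁ : M) {a₂ a₂' b₂ b₂' : M} (f : a₂' ⟶ a₂) (g : b₂ ⟶ b₂') :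
    d.p.tHom (𝟙 (R.obj a₁ b₁)) (R.map f g) ≫ R.μ a₁ b₁ a₂' b₂'
      = R.μ a₁ b₁ a₂ b₂ ≫ R.map (𝟙 a₁ ⊗ₘ f) (𝟙 b₁ ⊗ₘ g) := by
  have := hR.μ_nat (𝟙 a₁) (𝟙 b₁) f g
  rwa [hR.map_id] at this

lemma μ_push_left (d : DuoidalData V) {R : LaxMonData d.p M} (hR : IsLaxMon R)
    {a₁ a₁' b₁ b₁' : M} (a₂ b₂ : M) (f : a₁' ⟶ a₁) (g : b₁ ⟶ b₁') :
    d.p.tHom (R.map f g) (𝟙 (R.obj a₂ b₂)) ≫ R.μ a₁' b₁' a₂ b₂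
      = R.μ a₁ b₁ a₂ b₂ ≫ R.map (f ⊗ₘ 𝟙 a₂) (g ⊗ₘ 𝟙 b₂) := by
  have := hR.μ_nat f g (𝟙 a₂) (𝟙 b₂)
  rwa [hR.map_id] at this

/-- The unit of the composition product. -/
noncomputable def cunit (d : DuoidalData V) (S T : LaxMonData d.p M) :
    d.p.unit ⟶ compObj d S T (𝟙_ M) (𝟙_ M) :=
  d.delta ≫ d.s.tHom T.η S.η ≫ compPr d S T (𝟙_ M) (𝟙_ M) (𝟙_ M)

/-- The functorial action of the composition product. -/
noncomputable def cmap (d : DuoidalData V) (hd : IsDuoidal d) (S T : LaxMonData d.p M)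
    (hS : IsLaxMon S) (hT : IsLaxMon T) {a a' c c' : M} (f : a' ⟶ a) (g : c ⟶ c') :
    compObj d S T a c ⟶ compObj d S T a' c' :=
  compDesc d S T (𝟭 V) a c
    (fun b => d.s.tHom (T.map f (𝟙 b)) (S.map (𝟙 b) g) ≫ compPr d S T a' c' b)
    (by
      intro x y σ
      simp only [Functor.id_map, ← Category.assoc]
      rw [tHom4 d hd S T hS hT, tHom4 d hd S T hS hT]
      simp only [Category.id_comp, Category.comp_id, Category.assoc]
      have hv : S.map σ g = S.map (𝟙 y) g ≫ S.map σ (𝟙 c') := by rw [← hS.map_comp]; simp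
      rw [hv, compPr_shift d hd S T hS hT a' c' σ (T.map f (𝟙 x)) (S.map (𝟙 y) g),
        ← hT.map_comp]
      simp)

lemma cmap_fac (d : DuoidalData V) (hd : IsDuoidal d) (S T : LaxMonData d.p M)
    (hS : IsLaxMon S) (hT : IsLaxMon T) {a a' c c' : M} (f : a' ⟶ a) (g : c ⟶ c') (b : M) :
    compPr d S T a c b ≫ cmap d hd S T hS hT f g
      = d.s.tHom (T.map f (𝟙 b)) (S.map (𝟙 b) g) ≫ compPr d S T a' c' b :=
  compDesc_fac d S T (𝟭 V) a c _ _ b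

/-- The components of the multiplication. -/
noncomputable def gmul (d : DuoidalData V) (S T : LaxMonData d.p M)
    (a₁ c₁ a₂ c₂ b₁ b₂ : M) :
    d.p.t (d.s.t (T.obj a₁ b₁) (S.obj b₁ c₁)) (d.s.t (T.obj a₂ b₂) (S.obj b₂ c₂))
      ⟶ compObj d S T (a₁ ⊗ a₂) (c₁ ⊗ c₂) :=
  d.zeta _ _ _ _ ≫ d.s.tHom (T.μ a₁ b₁ a₂ b₂) (S.μ b₁ c₁ b₂ c₂)
    ≫ compPr d S T (a₁ ⊗ a₂) (c₁ ⊗ c₂) (b₁ ⊗ b₂)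

lemma zeta_push_right' (d : DuoidalData V) (hd : IsDuoidal d) {A B C C' D D' : V}
    (h : C ⟶ C') (k : D ⟶ D') {Z : V} (w : d.s.t (d.p.t A C') (d.p.t B D') ⟶ Z) :
    d.p.tHom (𝟙 (d.s.t A B)) (d.s.tHom h k) ≫ d.zeta A B C' D' ≫ w
      = d.zeta A B C D ≫ d.s.tHom (d.p.tHom (𝟙 A) h) (d.p.tHom (𝟙 B) k) ≫ w := by
  rw [← Category.assoc, zeta_push_right d hd, Category.assoc]

lemma zeta_push_left' (d : DuoidalData V) (hd : IsDuoidal d) {A A' B B' C D : V}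
    (f : A ⟶ A') (g : B ⟶ B') {Z : V} (w : d.s.t (d.p.t A' C) (d.p.t B' D) ⟶ Z) :
    d.p.tHom (d.s.tHom f g) (𝟙 (d.s.t C D)) ≫ d.zeta A' B' C D ≫ w
      = d.zeta A B C D ≫ d.s.tHom (d.p.tHom f (𝟙 C)) (d.p.tHom g (𝟙 D)) ≫ w := by
  rw [← Category.assoc, zeta_push_left d hd, Category.assoc]

lemma sTS_pushR (d : DuoidalData V) (hd : IsDuoidal d) (S T : LaxMonData d.p M)
    (hS : IsLaxMon S) (hT : IsLaxMon T) {a₁ b₁ b₁' c₁ : M}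
    {a₂ a₂' x x' u u' v v' : M} (f : a₂' ⟶ a₂) (g : x ⟶ x') (h : u' ⟶ u) (k : v ⟶ v')
    {Z : V} (w : d.s.t (T.obj (a₁ ⊗ a₂') (b₁ ⊗ x')) (S.obj (b₁' ⊗ u') (c₁ ⊗ v')) ⟶ Z) :
    d.s.tHom (d.p.tHom (𝟙 (T.obj a₁ b₁)) (T.map f g)) (d.p.tHom (𝟙 (S.obj b₁' c₁)) (S.map h k))
        ≫ d.s.tHom (T.μ a₁ b₁ a₂' x') (S.μ b₁' c₁ u' v') ≫ w
      = d.s.tHom (T.μ a₁ b₁ a₂ x) (S.μ b₁' c₁ u v)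
          ≫ d.s.tHom (T.map (𝟙 a₁ ⊗ₘ f) (𝟙 b₁ ⊗ₘ g)) (S.map (𝟙 b₁' ⊗ₘ h) (𝟙 c₁ ⊗ₘ k)) ≫ w := by
  rw [← Category.assoc, ← hd.s_mon.tHom_comp, μ_push_right d hT, μ_push_right d hS,
    hd.s_mon.tHom_comp, Category.assoc]

lemma sTS_pushL (d : DuoidalData V) (hd : IsDuoidal d) (S T : LaxMonData d.p M)
    (hS : IsLaxMon S) (hT : IsLaxMon T) {a₂ b₂ b₂' c₂ : M}
    {a₁ a₁' x x' u u' v v' : M} (f : a₁' ⟶ a₁) (g : x ⟶ x') (h : u' ⟶ u) (k : v ⟶ v')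
    {Z : V} (w : d.s.t (T.obj (a₁' ⊗ a₂) (x' ⊗ b₂)) (S.obj (u' ⊗ b₂') (v' ⊗ c₂)) ⟶ Z) :
    d.s.tHom (d.p.tHom (T.map f g) (𝟙 (T.obj a₂ b₂))) (d.p.tHom (S.map h k) (𝟙 (S.obj b₂' c₂)))
        ≫ d.s.tHom (T.μ a₁' x' a₂ b₂) (S.μ u' v' b₂' c₂) ≫ w
      = d.s.tHom (T.μ a₁ x a₂ b₂) (S.μ u v b₂' c₂)
          ≫ d.s.tHom (T.map (f ⊗ₘ 𝟙 a₂) (g ⊗ₘ 𝟙 b₂)) (S.map (h ⊗ₘ 𝟙 b₂') (k ⊗ₘ 𝟙 c₂)) ≫ w := by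
  rw [← Category.assoc, ← hd.s_mon.tHom_comp, μ_push_left d hT, μ_push_left d hS,
    hd.s_mon.tHom_comp, Category.assoc]

lemma gmul_natR (d : DuoidalData V) (hd : IsDuoidal d) (S T : LaxMonData d.p M)
    (hS : IsLaxMon S) (hT : IsLaxMon T) (a₁ c₁ a₂ c₂ b₁ : M) {x y : M} (σ : x ⟶ y) :
    d.p.tHom (𝟙 (d.s.t (T.obj a₁ b₁) (S.obj b₁ c₁)))
        (d.s.tHom (T.map (𝟙 a₂) (𝟙 x)) (S.map σ (𝟙 c₂))) ≫ gmul d S T a₁ c₁ a₂ c₂ b₁ x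
      = d.p.tHom (𝟙 (d.s.t (T.obj a₁ b₁) (S.obj b₁ c₁)))
          (d.s.tHom (T.map (𝟙 a₂) σ) (S.map (𝟙 y) (𝟙 c₂))) ≫ gmul d S T a₁ c₁ a₂ c₂ b₁ y := by
  unfold gmul
  rw [zeta_push_right' d hd, zeta_push_right' d hd,
    sTS_pushR d hd S T hS hT, sTS_pushR d hd S T hS hT]
  simp only [MonoidalCategory.id_tensorHom_id]
  rw [compPr_rel d S T _ _ (𝟙 b₁ ⊗ₘ σ)]

lemma gmul_natL (d : DuoidalData V) (hd : IsDuoidal d) (S T : LaxMonData d.p M)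
    (hS : IsLaxMon S) (hT : IsLaxMon T) (a₁ c₁ a₂ c₂ b₂ : M) {x y : M} (σ : x ⟶ y) :
    d.p.tHom (d.s.tHom (T.map (𝟙 a₁) (𝟙 x)) (S.map σ (𝟙 c₁)))
        (𝟙 (d.s.t (T.obj a₂ b₂) (S.obj b₂ c₂))) ≫ gmul d S T a₁ c₁ a₂ c₂ x b₂
      = d.p.tHom (d.s.tHom (T.map (𝟙 a₁) σ) (S.map (𝟙 y) (𝟙 c₁)))
          (𝟙 (d.s.t (T.obj a₂ b₂) (S.obj b₂ c₂))) ≫ gmul d S T a₁ c₁ a₂ c₂ y b₂ := by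
  unfold gmul
  rw [zeta_push_left' d hd, zeta_push_left' d hd,
    sTS_pushL d hd S T hS hT, sTS_pushL d hd S T hS hT]
  simp only [MonoidalCategory.id_tensorHom_id]
  rw [compPr_rel d S T _ _ (σ ⊗ₘ 𝟙 b₂)]

lemma tHom_split_left {m : MonStrData V} (hm : IsMonStr m) {A B B' C C' : V}
    (f : A ⟶ B) (g : B ⟶ B') (h : C ⟶ C') :
    m.tHom (f ≫ g) h = m.tHom f (𝟙 C) ≫ m.tHom g h := by
  rw [← hm.tHom_comp]; simp

lemma tHom_split_right {m : MonStrData V} (hm : IsMonStr m) {A A' C D D' : V}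
    (f : A ⟶ A') (g : C ⟶ D) (h : D ⟶ D') :
    m.tHom f (g ≫ h) = m.tHom (𝟙 A) g ≫ m.tHom f h := by
  rw [← hm.tHom_comp]; simp

lemma exch_gen {m : MonStrData V} (hm : IsMonStr m) {A B C D Z : V}
    (f : A ⟶ B) (g : C ⟶ D) (w : m.t B D ⟶ Z) :
    m.tHom (𝟙 A) g ≫ m.tHom f (𝟙 D) ≫ w = m.tHom f (𝟙 C) ≫ m.tHom (𝟙 B) g ≫ w := by
  rw [← Category.assoc, tHom_right_left hm, ← tHom_left_right hm, Category.assoc]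

lemma stc' (d : DuoidalData V) (hd : IsDuoidal d) {A A' B B' C C' Z : V}
    (f : A ⟶ A') (g : B ⟶ B') (f' : A' ⟶ C') (g' : B' ⟶ C)
    (w : d.s.t C' C ⟶ Z) :
    d.s.tHom f g ≫ d.s.tHom f' g' ≫ w = d.s.tHom (f ≫ f') (g ≫ g') ≫ w := by
  rw [← Category.assoc, ← hd.s_mon.tHom_comp]

lemma zeta_nat' (d : DuoidalData V) (hd : IsDuoidal d)
    {A A' B B' C C' D D' : V} (f : A ⟶ A') (g : B ⟶ B') (h : C ⟶ C') (k : D ⟶ D')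
    {Z : V} (w : d.s.t (d.p.t A' C') (d.p.t B' D') ⟶ Z) :
    d.p.tHom (d.s.tHom f g) (d.s.tHom h k) ≫ d.zeta A' B' C' D' ≫ w
      = d.zeta A B C D ≫ d.s.tHom (d.p.tHom f h) (d.p.tHom g k) ≫ w := by
  rw [← Category.assoc, hd.zeta_nat, Category.assoc]

lemma sTS_push (d : DuoidalData V) (hd : IsDuoidal d) (S T : LaxMonData d.p M)
    (hS : IsLaxMon S) (hT : IsLaxMon T)
    {a₁ a₁' b₁ b₁' a₂ a₂' b₂ b₂' : M} {x₁ x₁' y₁ y₁' x₂ x₂' y₂ y₂' : M}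
    (f₁ : a₁' ⟶ a₁) (g₁ : b₁ ⟶ b₁') (f₂ : a₂' ⟶ a₂) (g₂ : b₂ ⟶ b₂')
    (h₁ : x₁' ⟶ x₁) (k₁ : y₁ ⟶ y₁') (h₂ : x₂' ⟶ x₂) (k₂ : y₂ ⟶ y₂')
    {Z : V} (w : d.s.t (T.obj (a₁' ⊗ a₂') (b₁' ⊗ b₂')) (S.obj (x₁' ⊗ x₂') (y₁' ⊗ y₂')) ⟶ Z) :
    d.s.tHom (d.p.tHom (T.map f₁ g₁) (T.map f₂ g₂)) (d.p.tHom (S.map h₁ k₁) (S.map h₂ k₂))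
        ≫ d.s.tHom (T.μ a₁' b₁' a₂' b₂') (S.μ x₁' y₁' x₂' y₂') ≫ w
      = d.s.tHom (T.μ a₁ b₁ a₂ b₂) (S.μ x₁ y₁ x₂ y₂)
          ≫ d.s.tHom (T.map (f₁ ⊗ₘ f₂) (g₁ ⊗ₘ g₂)) (S.map (h₁ ⊗ₘ h₂) (k₁ ⊗ₘ k₂)) ≫ w := by
  rw [← Category.assoc, ← hd.s_mon.tHom_comp, hT.μ_nat, hS.μ_nat,
    hd.s_mon.tHom_comp, Category.assoc]

/-- `nu` : descent of the multiplication in the second coend variable. -/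
noncomputable def nu (d : DuoidalData V) (hd : IsDuoidal d) (S T : LaxMonData d.p M)
    (hS : IsLaxMon S) (hT : IsLaxMon T)
    (hp₁ : ∀ X : V, PreservesColimits (tLeft d.p hd.p_mon X))
    (a₁ c₁ a₂ c₂ b₁ : M) :
    d.p.t (d.s.t (T.obj a₁ b₁) (S.obj b₁ c₁)) (compObj d S T a₂ c₂)
      ⟶ compObj d S T (a₁ ⊗ a₂) (c₁ ⊗ c₂) :=
  haveI := hp₁ (d.s.t (T.obj a₁ b₁) (S.obj b₁ c₁))
  compDesc d S T (tLeft d.p hd.p_mon (d.s.t (T.obj a₁ b₁) (S.obj b₁ c₁))) a₂ c₂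
    (fun b₂ => gmul d S T a₁ c₁ a₂ c₂ b₁ b₂)
    (fun {x y} σ => gmul_natR d hd S T hS hT a₁ c₁ a₂ c₂ b₁ σ)

lemma nu_fac (d : DuoidalData V) (hd : IsDuoidal d) (S T : LaxMonData d.p M)
    (hS : IsLaxMon S) (hT : IsLaxMon T)
    (hp₁ : ∀ X : V, PreservesColimits (tLeft d.p hd.p_mon X))
    (a₁ c₁ a₂ c₂ b₁ b₂ : M) :
    d.p.tHom (𝟙 (d.s.t (T.obj a₁ b₁) (S.obj b₁ c₁))) (compPr d S T a₂ c₂ b₂)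
        ≫ nu d hd S T hS hT hp₁ a₁ c₁ a₂ c₂ b₁
      = gmul d S T a₁ c₁ a₂ c₂ b₁ b₂ :=
  haveI := hp₁ (d.s.t (T.obj a₁ b₁) (S.obj b₁ c₁))
  compDesc_fac d S T (tLeft d.p hd.p_mon (d.s.t (T.obj a₁ b₁) (S.obj b₁ c₁))) a₂ c₂ _ _ b₂

/-- The multiplication of the composition product. -/
noncomputable def cmul (d : DuoidalData V) (hd : IsDuoidal d) (S T : LaxMonData d.p M)
    (hS : IsLaxMon S) (hT : IsLaxMon T)
    (hp₁ : ∀ X : V, PreservesColimits (tLeft d.p hd.p_mon X))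
    (hp₂ : ∀ X : V, PreservesColimits (tRight d.p hd.p_mon X))
    (a₁ c₁ a₂ c₂ : M) :
    d.p.t (compObj d S T a₁ c₁) (compObj d S T a₂ c₂)
      ⟶ compObj d S T (a₁ ⊗ a₂) (c₁ ⊗ c₂) :=
  haveI := hp₂ (compObj d S T a₂ c₂)
  compDesc d S T (tRight d.p hd.p_mon (compObj d S T a₂ c₂)) a₁ c₁
    (fun b₁ => nu d hd S T hS hT hp₁ a₁ c₁ a₂ c₂ b₁)
    (fun {x y} σ => by
      haveI := hp₁ (d.s.t (T.obj a₁ x) (S.obj y c₁))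
      apply comp_hom_ext d S T (tLeft d.p hd.p_mon (d.s.t (T.obj a₁ x) (S.obj y c₁))) a₂ c₂
      intro b₂
      show d.p.tHom (𝟙 _) (compPr d S T a₂ c₂ b₂)
          ≫ d.p.tHom (d.s.tHom (T.map (𝟙 a₁) (𝟙 x)) (S.map σ (𝟙 c₁))) (𝟙 _)
          ≫ nu d hd S T hS hT hp₁ a₁ c₁ a₂ c₂ x
        = d.p.tHom (𝟙 _) (compPr d S T a₂ c₂ b₂)
          ≫ d.p.tHom (d.s.tHom (T.map (𝟙 a₁) σ) (S.map (𝟙 y) (𝟙 c₁))) (𝟙 _)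
          ≫ nu d hd S T hS hT hp₁ a₁ c₁ a₂ c₂ y
      rw [exch_gen hd.p_mon, exch_gen hd.p_mon,
        nu_fac d hd S T hS hT hp₁, nu_fac d hd S T hS hT hp₁,
        gmul_natL d hd S T hS hT])

lemma cmul_fac (d : DuoidalData V) (hd : IsDuoidal d) (S T : LaxMonData d.p M)
    (hS : IsLaxMon S) (hT : IsLaxMon T)
    (hp₁ : ∀ X : V, PreservesColimits (tLeft d.p hd.p_mon X))
    (hp₂ : ∀ X : V, PreservesColimits (tRight d.p hd.p_mon X))
    (a₁ c₁ a₂ c₂ b₁ : M) :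
    d.p.tHom (compPr d S T a₁ c₁ b₁) (𝟙 (compObj d S T a₂ c₂))
        ≫ cmul d hd S T hS hT hp₁ hp₂ a₁ c₁ a₂ c₂
      = nu d hd S T hS hT hp₁ a₁ c₁ a₂ c₂ b₁ :=
  haveI := hp₂ (compObj d S T a₂ c₂)
  compDesc_fac d S T (tRight d.p hd.p_mon (compObj d S T a₂ c₂)) a₁ c₁ _ _ b₁

lemma cmul_comp (d : DuoidalData V) (hd : IsDuoidal d) (S T : LaxMonData d.p M)
    (hS : IsLaxMon S) (hT : IsLaxMon T)
    (hp₁ : ∀ X : V, PreservesColimits (tLeft d.p hd.p_mon X))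
    (hp₂ : ∀ X : V, PreservesColimits (tRight d.p hd.p_mon X))
    (a₁ c₁ a₂ c₂ b₁ b₂ : M) :
    d.p.tHom (compPr d S T a₁ c₁ b₁) (compPr d S T a₂ c₂ b₂)
        ≫ cmul d hd S T hS hT hp₁ hp₂ a₁ c₁ a₂ c₂
      = gmul d S T a₁ c₁ a₂ c₂ b₁ b₂ := by
  rw [← tHom_right_left hd.p_mon, Category.assoc,
    cmul_fac d hd S T hS hT hp₁ hp₂, nu_fac d hd S T hS hT hp₁]

lemma chom_ext (d : DuoidalData V) (S T : LaxMonData d.p M) {a c : M} {Z : V}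
    {h k : compObj d S T a c ⟶ Z}
    (w : ∀ b : M, compPr d S T a c b ≫ h = compPr d S T a c b ≫ k) : h = k :=
  comp_hom_ext d S T (𝟭 V) a c (fun b => w b)

lemma chom_extL (d : DuoidalData V) (hd : IsDuoidal d) (S T : LaxMonData d.p M)
    (hp₁ : ∀ X : V, PreservesColimits (tLeft d.p hd.p_mon X)) (W : V) {a c : M} {Z : V}
    {h k : d.p.t W (compObj d S T a c) ⟶ Z}
    (w : ∀ b : M, d.p.tHom (𝟙 W) (compPr d S T a c b) ≫ h
      = d.p.tHom (𝟙 W) (compPr d S T a c b) ≫ k) : h = k :=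
  haveI := hp₁ W
  comp_hom_ext d S T (tLeft d.p hd.p_mon W) a c w

lemma chom_extR (d : DuoidalData V) (hd : IsDuoidal d) (S T : LaxMonData d.p M)
    (hp₂ : ∀ X : V, PreservesColimits (tRight d.p hd.p_mon X)) (W : V) {a c : M} {Z : V}
    {h k : d.p.t (compObj d S T a c) W ⟶ Z}
    (w : ∀ b : M, d.p.tHom (compPr d S T a c b) (𝟙 W) ≫ h
      = d.p.tHom (compPr d S T a c b) (𝟙 W) ≫ k) : h = k :=
  haveI := hp₂ W
  comp_hom_ext d S T (tRight d.p hd.p_mon W) a c w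

lemma chom_ext₂ (d : DuoidalData V) (hd : IsDuoidal d) (S T : LaxMonData d.p M)
    (hp₁ : ∀ X : V, PreservesColimits (tLeft d.p hd.p_mon X))
    (hp₂ : ∀ X : V, PreservesColimits (tRight d.p hd.p_mon X))
    {a₁ c₁ a₂ c₂ : M} {Z : V}
    {h k : d.p.t (compObj d S T a₁ c₁) (compObj d S T a₂ c₂) ⟶ Z}
    (w : ∀ b₁ b₂ : M,
      d.p.tHom (compPr d S T a₁ c₁ b₁) (compPr d S T a₂ c₂ b₂) ≫ h
        = d.p.tHom (compPr d S T a₁ c₁ b₁) (compPr d S T a₂ c₂ b₂) ≫ k) : h = k := by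
  apply chom_extR d hd S T hp₂ (compObj d S T a₂ c₂)
  intro b₁
  apply chom_extL d hd S T hp₁ (d.s.t (T.obj a₁ b₁) (S.obj b₁ c₁))
  intro b₂
  rw [← Category.assoc, ← Category.assoc, tHom_right_left hd.p_mon]
  exact w b₁ b₂

lemma chom_ext₃ (d : DuoidalData V) (hd : IsDuoidal d) (S T : LaxMonData d.p M)
    (hp₁ : ∀ X : V, PreservesColimits (tLeft d.p hd.p_mon X))
    (hp₂ : ∀ X : V, PreservesColimits (tRight d.p hd.p_mon X))
    {a₁ c₁ a₂ c₂ a₃ c₃ : M} {Z : V}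
    {h k : d.p.t (d.p.t (compObj d S T a₁ c₁) (compObj d S T a₂ c₂)) (compObj d S T a₃ c₃) ⟶ Z}
    (w : ∀ b₁ b₂ b₃ : M,
      d.p.tHom (d.p.tHom (compPr d S T a₁ c₁ b₁) (compPr d S T a₂ c₂ b₂)) (compPr d S T a₃ c₃ b₃) ≫ h
        = d.p.tHom (d.p.tHom (compPr d S T a₁ c₁ b₁) (compPr d S T a₂ c₂ b₂)) (compPr d S T a₃ c₃ b₃) ≫ k) :
    h = k := by
  apply chom_extL d hd S T hp₁ (d.p.t (compObj d S T a₁ c₁) (compObj d S T a₂ c₂))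
  intro b₃
  haveI := hp₂ (compObj d S T a₂ c₂)
  haveI := hp₂ (d.s.t (T.obj a₃ b₃) (S.obj b₃ c₃))
  apply comp_hom_ext d S T (tRight d.p hd.p_mon (compObj d S T a₂ c₂) ⋙
    tRight d.p hd.p_mon (d.s.t (T.obj a₃ b₃) (S.obj b₃ c₃))) a₁ c₁
  intro b₁
  haveI := hp₁ (d.s.t (T.obj a₁ b₁) (S.obj b₁ c₁))
  apply comp_hom_ext d S T (tLeft d.p hd.p_mon (d.s.t (T.obj a₁ b₁) (S.obj b₁ c₁)) ⋙
    tRight d.p hd.p_mon (d.s.t (T.obj a₃ b₃) (S.obj b₃ c₃))) a₂ c₂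
  intro b₂
  show d.p.tHom (d.p.tHom (𝟙 _) (compPr d S T a₂ c₂ b₂)) (𝟙 _)
      ≫ d.p.tHom (d.p.tHom (compPr d S T a₁ c₁ b₁) (𝟙 _)) (𝟙 _)
      ≫ d.p.tHom (𝟙 _) (compPr d S T a₃ c₃ b₃) ≫ h
    = d.p.tHom (d.p.tHom (𝟙 _) (compPr d S T a₂ c₂ b₂)) (𝟙 _)
      ≫ d.p.tHom (d.p.tHom (compPr d S T a₁ c₁ b₁) (𝟙 _)) (𝟙 _)
      ≫ d.p.tHom (𝟙 _) (compPr d S T a₃ c₃ b₃) ≫ k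
  have comb : ∀ (u : d.p.t (d.p.t (compObj d S T a₁ c₁) (compObj d S T a₂ c₂)) (compObj d S T a₃ c₃) ⟶ Z),
      d.p.tHom (d.p.tHom (𝟙 (d.s.t (T.obj a₁ b₁) (S.obj b₁ c₁))) (compPr d S T a₂ c₂ b₂)) (𝟙 (d.s.t (T.obj a₃ b₃) (S.obj b₃ c₃)))
        ≫ d.p.tHom (d.p.tHom (compPr d S T a₁ c₁ b₁) (𝟙 (compObj d S T a₂ c₂))) (𝟙 (d.s.t (T.obj a₃ b₃) (S.obj b₃ c₃)))
        ≫ d.p.tHom (𝟙 (d.p.t (compObj d S T a₁ c₁) (compObj d S T a₂ c₂))) (compPr d S T a₃ c₃ b₃) ≫ u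
      = d.p.tHom (d.p.tHom (compPr d S T a₁ c₁ b₁) (compPr d S T a₂ c₂ b₂)) (compPr d S T a₃ c₃ b₃) ≫ u := by
    intro u
    rw [← Category.assoc, ← Category.assoc, ← hd.p_mon.tHom_comp, tHom_right_left hd.p_mon,
      Category.comp_id, Category.assoc, ← Category.assoc, tHom_left_right hd.p_mon]
  rw [comb, comb]
  exact w b₁ b₂ b₃

lemma ptc' (d : DuoidalData V) (hd : IsDuoidal d) {A A' B B' C C' Z : V}
    (f : A ⟶ A') (g : B ⟶ B') (f' : A' ⟶ C') (g' : B' ⟶ C)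
    (w : d.p.t C' C ⟶ Z) :
    d.p.tHom f g ≫ d.p.tHom f' g' ≫ w = d.p.tHom (f ≫ f') (g ≫ g') ≫ w := by
  rw [← Category.assoc, ← hd.p_mon.tHom_comp]

lemma cmul_comp' (d : DuoidalData V) (hd : IsDuoidal d) (S T : LaxMonData d.p M)
    (hS : IsLaxMon S) (hT : IsLaxMon T)
    (hp₁ : ∀ X : V, PreservesColimits (tLeft d.p hd.p_mon X))
    (hp₂ : ∀ X : V, PreservesColimits (tRight d.p hd.p_mon X))
    (a₁ c₁ a₂ c₂ b₁ b₂ : M) {Z : V} (w : compObj d S T (a₁ ⊗ a₂) (c₁ ⊗ c₂) ⟶ Z) :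
    d.p.tHom (compPr d S T a₁ c₁ b₁) (compPr d S T a₂ c₂ b₂)
        ≫ cmul d hd S T hS hT hp₁ hp₂ a₁ c₁ a₂ c₂ ≫ w
      = gmul d S T a₁ c₁ a₂ c₂ b₁ b₂ ≫ w := by
  rw [← Category.assoc, cmul_comp d hd S T hS hT hp₁ hp₂]

lemma hex' (d : DuoidalData V) (hd : IsDuoidal d) (A B C D E F : V) {Z : V}
    (w : d.s.t (d.p.t A (d.p.t C E)) (d.p.t B (d.p.t D F)) ⟶ Z) :
    d.p.tHom (d.zeta A B C D) (𝟙 (d.s.t E F)) ≫ d.zeta (d.p.t A C) (d.p.t B D) E F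
        ≫ d.s.tHom (d.p.aHom A C E) (d.p.aHom B D F) ≫ w
      = d.p.aHom (d.s.t A B) (d.s.t C D) (d.s.t E F)
          ≫ d.p.tHom (𝟙 (d.s.t A B)) (d.zeta C D E F)
          ≫ d.zeta A B (d.p.t C E) (d.p.t D F) ≫ w := by
  have h := congrArg (fun t => t ≫ w) (hd.hexagon_p A B C D E F)
  simpa [Category.assoc] using h

lemma unit_p_left' (d : DuoidalData V) (hd : IsDuoidal d) (A B : V) {Z : V}
    (w : d.s.t A B ⟶ Z) :
    d.p.tHom d.delta (𝟙 (d.s.t A B)) ≫ d.zeta d.p.unit d.p.unit A B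
        ≫ d.s.tHom (d.p.lHom A) (d.p.lHom B) ≫ w
      = d.p.lHom (d.s.t A B) ≫ w := by
  have h := congrArg (fun t => t ≫ w) (hd.unit_p_left A B)
  simpa [Category.assoc] using h

lemma unit_p_right' (d : DuoidalData V) (hd : IsDuoidal d) (A B : V) {Z : V}
    (w : d.s.t A B ⟶ Z) :
    d.p.tHom (𝟙 (d.s.t A B)) d.delta ≫ d.zeta A B d.p.unit d.p.unit
        ≫ d.s.tHom (d.p.rHom A) (d.p.rHom B) ≫ w
      = d.p.rHom (d.s.t A B) ≫ w := by
  have h := congrArg (fun t => t ≫ w) (hd.unit_p_right A B)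
  simpa [Category.assoc] using h

lemma ax_map_id (d : DuoidalData V) (hd : IsDuoidal d) (S T : LaxMonData d.p M)
    (hS : IsLaxMon S) (hT : IsLaxMon T) (a c : M) :
    cmap d hd S T hS hT (𝟙 a) (𝟙 c) = 𝟙 (compObj d S T a c) := by
  apply chom_ext d S T
  intro b
  rw [cmap_fac d hd S T hS hT, hT.map_id, hS.map_id, hd.s_mon.tHom_id]
  simp

lemma ax_map_comp (d : DuoidalData V) (hd : IsDuoidal d) (S T : LaxMonData d.p M)
    (hS : IsLaxMon S) (hT : IsLaxMon T) {a a' a'' c c' c'' : M}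
    (f : a' ⟶ a) (f' : a'' ⟶ a') (g : c ⟶ c') (g' : c' ⟶ c'') :
    cmap d hd S T hS hT (f' ≫ f) (g ≫ g')
      = cmap d hd S T hS hT f g ≫ cmap d hd S T hS hT f' g' := by
  apply chom_ext d S T
  intro b
  conv_lhs => rw [cmap_fac d hd S T hS hT]
  conv_rhs => rw [← Category.assoc, cmap_fac d hd S T hS hT, Category.assoc,
    cmap_fac d hd S T hS hT, ← Category.assoc, tHom4 d hd S T hS hT]
  simp

lemma ax_mu_nat (d : DuoidalData V) (hd : IsDuoidal d) (S T : LaxMonData d.p M)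
    (hS : IsLaxMon S) (hT : IsLaxMon T)
    (hp₁ : ∀ X : V, PreservesColimits (tLeft d.p hd.p_mon X))
    (hp₂ : ∀ X : V, PreservesColimits (tRight d.p hd.p_mon X))
    {a₁ a₁' c₁ c₁' a₂ a₂' c₂ c₂' : M}
    (f₁ : a₁' ⟶ a₁) (g₁ : c₁ ⟶ c₁') (f₂ : a₂' ⟶ a₂) (g₂ : c₂ ⟶ c₂') :
    d.p.tHom (cmap d hd S T hS hT f₁ g₁) (cmap d hd S T hS hT f₂ g₂)
        ≫ cmul d hd S T hS hT hp₁ hp₂ a₁' c₁' a₂' c₂'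
      = cmul d hd S T hS hT hp₁ hp₂ a₁ c₁ a₂ c₂
          ≫ cmap d hd S T hS hT (f₁ ⊗ₘ f₂) (g₁ ⊗ₘ g₂) := by
  apply chom_ext₂ d hd S T hp₁ hp₂
  intro b₁ b₂
  conv_lhs => rw [ptc' d hd, cmap_fac d hd S T hS hT, cmap_fac d hd S T hS hT,
    hd.p_mon.tHom_comp, Category.assoc, cmul_comp d hd S T hS hT hp₁ hp₂]
  conv_rhs => rw [cmul_comp' d hd S T hS hT hp₁ hp₂]
  unfold gmul
  conv_rhs => rw [Category.assoc, Category.assoc, cmap_fac d hd S T hS hT]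
  rw [zeta_nat' d hd, sTS_push d hd S T hS hT]
  simp only [MonoidalCategory.id_tensorHom_id, Category.assoc]

lemma ax_assoc (d : DuoidalData V) (hd : IsDuoidal d) (S T : LaxMonData d.p M)
    (hS : IsLaxMon S) (hT : IsLaxMon T)
    (hp₁ : ∀ X : V, PreservesColimits (tLeft d.p hd.p_mon X))
    (hp₂ : ∀ X : V, PreservesColimits (tRight d.p hd.p_mon X))
    (a₁ c₁ a₂ c₂ a₃ c₃ : M) :
    d.p.tHom (cmul d hd S T hS hT hp₁ hp₂ a₁ c₁ a₂ c₂) (𝟙 (compObj d S T a₃ c₃))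
        ≫ cmul d hd S T hS hT hp₁ hp₂ (a₁ ⊗ a₂) (c₁ ⊗ c₂) a₃ c₃
        ≫ cmap d hd S T hS hT (α_ a₁ a₂ a₃).inv (α_ c₁ c₂ c₃).hom
      = d.p.aHom (compObj d S T a₁ c₁) (compObj d S T a₂ c₂) (compObj d S T a₃ c₃)
          ≫ d.p.tHom (𝟙 (compObj d S T a₁ c₁)) (cmul d hd S T hS hT hp₁ hp₂ a₂ c₂ a₃ c₃)
          ≫ cmul d hd S T hS hT hp₁ hp₂ a₁ c₁ (a₂ ⊗ a₃) (c₂ ⊗ c₃) := by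
  apply chom_ext₃ d hd S T hp₁ hp₂
  intro b₁ b₂ b₃
  have hg : gmul d S T a₁ c₁ a₂ c₂ b₁ b₂
      = (d.zeta _ _ _ _ ≫ d.s.tHom (T.μ a₁ b₁ a₂ b₂) (S.μ b₁ c₁ b₂ c₂))
        ≫ compPr d S T (a₁ ⊗ a₂) (c₁ ⊗ c₂) (b₁ ⊗ b₂) := by
    simp [gmul]
  have hg23 : gmul d S T a₂ c₂ a₃ c₃ b₂ b₃
      = (d.zeta _ _ _ _ ≫ d.s.tHom (T.μ a₂ b₂ a₃ b₃) (S.μ b₂ c₂ b₃ c₃))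
        ≫ compPr d S T (a₂ ⊗ a₃) (c₂ ⊗ c₃) (b₂ ⊗ b₃) := by
    simp [gmul]
  have hTc : ((d.p.tHom (T.μ a₁ b₁ a₂ b₂) (𝟙 (T.obj a₃ b₃)) ≫ T.μ (a₁ ⊗ a₂) (b₁ ⊗ b₂) a₃ b₃)
        ≫ T.map (α_ a₁ a₂ a₃).inv (𝟙 ((b₁ ⊗ b₂) ⊗ b₃)))
        ≫ T.map (𝟙 (a₁ ⊗ (a₂ ⊗ a₃))) (α_ b₁ b₂ b₃).hom
      = d.p.aHom _ _ _ ≫ d.p.tHom (𝟙 (T.obj a₁ b₁)) (T.μ a₂ b₂ a₃ b₃)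
          ≫ T.μ a₁ b₁ (a₂ ⊗ a₃) (b₂ ⊗ b₃) := by
    have e : T.map (α_ a₁ a₂ a₃).inv (𝟙 ((b₁ ⊗ b₂) ⊗ b₃))
        ≫ T.map (𝟙 (a₁ ⊗ (a₂ ⊗ a₃))) (α_ b₁ b₂ b₃).hom
        = T.map (α_ a₁ a₂ a₃).inv (α_ b₁ b₂ b₃).hom := by
      rw [← hT.map_comp]; simp
    simp only [Category.assoc]
    rw [e, hT.assoc]
  have hSc : ((d.p.tHom (S.μ b₁ c₁ b₂ c₂) (𝟙 (S.obj b₃ c₃)) ≫ S.μ (b₁ ⊗ b₂) (c₁ ⊗ c₂) b₃ c₃)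
        ≫ S.map (𝟙 ((b₁ ⊗ b₂) ⊗ b₃)) (α_ c₁ c₂ c₃).hom)
      = ((d.p.aHom _ _ _ ≫ d.p.tHom (𝟙 (S.obj b₁ c₁)) (S.μ b₂ c₂ b₃ c₃)
          ≫ S.μ b₁ c₁ (b₂ ⊗ b₃) (c₂ ⊗ c₃)))
        ≫ S.map (α_ b₁ b₂ b₃).hom (𝟙 (c₁ ⊗ (c₂ ⊗ c₃))) := by
    have e : S.map (𝟙 ((b₁ ⊗ b₂) ⊗ b₃)) (α_ c₁ c₂ c₃).hom
        = S.map (α_ b₁ b₂ b₃).inv (α_ c₁ c₂ c₃).hom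
          ≫ S.map (α_ b₁ b₂ b₃).hom (𝟙 (c₁ ⊗ (c₂ ⊗ c₃))) := by
      rw [← hS.map_comp]; simp
    rw [e, ← hS.assoc]
    simp only [Category.assoc]
  conv_lhs => rw [← Category.assoc, ← hd.p_mon.tHom_comp,
    cmul_comp d hd S T hS hT hp₁ hp₂, Category.comp_id, hg,
    tHom_split_left hd.p_mon, Category.assoc,
    cmul_comp' d hd S T hS hT hp₁ hp₂]
  conv_lhs => simp only [gmul, Category.assoc]
  conv_lhs => rw [cmap_fac d hd S T hS hT, tHom_split_left hd.p_mon, Category.assoc,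
    zeta_push_left' d hd, stc' d hd, stc' d hd, hSc,
    compPr_shift d hd S T hS hT _ _ (α_ b₁ b₂ b₃).hom, hTc, ← stc' d hd,
    hex' d hd]
  conv_rhs => rw [← Category.assoc, hd.p_mon.a_nat, Category.assoc,
    ptc' d hd, Category.comp_id, cmul_comp d hd S T hS hT hp₁ hp₂, hg23,
    tHom_split_right hd.p_mon, Category.assoc, cmul_comp d hd S T hS hT hp₁ hp₂]
  conv_rhs => simp only [gmul, Category.assoc]
  conv_rhs => rw [tHom_split_right hd.p_mon, Category.assoc, zeta_push_right' d hd,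
    stc' d hd]

lemma ax_left_unit (d : DuoidalData V) (hd : IsDuoidal d) (S T : LaxMonData d.p M)
    (hS : IsLaxMon S) (hT : IsLaxMon T)
    (hp₁ : ∀ X : V, PreservesColimits (tLeft d.p hd.p_mon X))
    (hp₂ : ∀ X : V, PreservesColimits (tRight d.p hd.p_mon X))
    (a c : M) :
    d.p.tHom (cunit d S T) (𝟙 (compObj d S T a c))
        ≫ cmul d hd S T hS hT hp₁ hp₂ (𝟙_ M) (𝟙_ M) a c
        ≫ cmap d hd S T hS hT (λ_ a).inv (λ_ c).hom
      = d.p.lHom (compObj d S T a c) := by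
  apply chom_extL d hd S T hp₁ d.p.unit
  intro b
  conv_rhs => rw [hd.p_mon.l_nat]
  have hcu : cunit d S T = (d.delta ≫ d.s.tHom T.η S.η)
      ≫ compPr d S T (𝟙_ M) (𝟙_ M) (𝟙_ M) := by simp [cunit]
  have hV : S.map (𝟙 ((𝟙_ M) ⊗ b)) (λ_ c).hom
      = S.map (λ_ b).inv (λ_ c).hom ≫ S.map (λ_ b).hom (𝟙 c) := by
    rw [← hS.map_comp]; simp
  have hV2 : ((d.p.tHom S.η (𝟙 (S.obj b c)) ≫ S.μ (𝟙_ M) (𝟙_ M) b c)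
        ≫ S.map (𝟙 ((𝟙_ M) ⊗ b)) (λ_ c).hom)
      = (((d.p.tHom S.η (𝟙 (S.obj b c)) ≫ S.μ (𝟙_ M) (𝟙_ M) b c)
        ≫ S.map (λ_ b).inv (λ_ c).hom) ≫ S.map (λ_ b).hom (𝟙 c)) := by
    rw [hV, ← Category.assoc]
  have hU : ((((d.p.tHom T.η (𝟙 (T.obj a b)) ≫ T.μ (𝟙_ M) (𝟙_ M) a b)
        ≫ T.map (λ_ a).inv (𝟙 ((𝟙_ M) ⊗ b))) ≫ T.map (𝟙 a) (λ_ b).hom))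
      = d.p.lHom (T.obj a b) := by
    have e : T.map (λ_ a).inv (𝟙 ((𝟙_ M) ⊗ b)) ≫ T.map (𝟙 a) (λ_ b).hom
        = T.map (λ_ a).inv (λ_ b).hom := by rw [← hT.map_comp]; simp
    simp only [Category.assoc]
    rw [e, hT.left_unit]
  have hW : ((d.p.tHom S.η (𝟙 (S.obj b c)) ≫ S.μ (𝟙_ M) (𝟙_ M) b c)
        ≫ S.map (λ_ b).inv (λ_ c).hom) = d.p.lHom (S.obj b c) := by
    rw [Category.assoc, hS.left_unit]
  conv_lhs => rw [← Category.assoc, tHom_right_left hd.p_mon, hcu,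
    tHom_split_left hd.p_mon, Category.assoc, cmul_comp' d hd S T hS hT hp₁ hp₂]
  conv_lhs => simp only [gmul, Category.assoc]
  conv_lhs => rw [cmap_fac d hd S T hS hT, tHom_split_left hd.p_mon, Category.assoc,
    zeta_push_left' d hd, stc' d hd, stc' d hd, hV2]
  conv_lhs => rw [compPr_shift d hd S T hS hT _ _ (λ_ b).hom, hU, hW,
    unit_p_left' d hd]

lemma ax_right_unit (d : DuoidalData V) (hd : IsDuoidal d) (S T : LaxMonData d.p M)
    (hS : IsLaxMon S) (hT : IsLaxMon T)
    (hp₁ : ∀ X : V, PreservesColimits (tLeft d.p hd.p_mon X))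
    (hp₂ : ∀ X : V, PreservesColimits (tRight d.p hd.p_mon X))
    (a c : M) :
    d.p.tHom (𝟙 (compObj d S T a c)) (cunit d S T)
        ≫ cmul d hd S T hS hT hp₁ hp₂ a c (𝟙_ M) (𝟙_ M)
        ≫ cmap d hd S T hS hT (ρ_ a).inv (ρ_ c).hom
      = d.p.rHom (compObj d S T a c) := by
  apply chom_extR d hd S T hp₂ d.p.unit
  intro b
  conv_rhs => rw [hd.p_mon.r_nat]
  have hcu : cunit d S T = (d.delta ≫ d.s.tHom T.η S.η)
      ≫ compPr d S T (𝟙_ M) (𝟙_ M) (𝟙_ M) := by simp [cunit]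
  have hV : S.map (𝟙 (b ⊗ (𝟙_ M))) (ρ_ c).hom
      = S.map (ρ_ b).inv (ρ_ c).hom ≫ S.map (ρ_ b).hom (𝟙 c) := by
    rw [← hS.map_comp]; simp
  have hV2 : ((d.p.tHom (𝟙 (S.obj b c)) S.η ≫ S.μ b c (𝟙_ M) (𝟙_ M))
        ≫ S.map (𝟙 (b ⊗ (𝟙_ M))) (ρ_ c).hom)
      = (((d.p.tHom (𝟙 (S.obj b c)) S.η ≫ S.μ b c (𝟙_ M) (𝟙_ M))
        ≫ S.map (ρ_ b).inv (ρ_ c).hom) ≫ S.map (ρ_ b).hom (𝟙 c)) := by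
    rw [hV, ← Category.assoc]
  have hU : ((((d.p.tHom (𝟙 (T.obj a b)) T.η ≫ T.μ a b (𝟙_ M) (𝟙_ M))
        ≫ T.map (ρ_ a).inv (𝟙 (b ⊗ (𝟙_ M)))) ≫ T.map (𝟙 a) (ρ_ b).hom))
      = d.p.rHom (T.obj a b) := by
    have e : T.map (ρ_ a).inv (𝟙 (b ⊗ (𝟙_ M))) ≫ T.map (𝟙 a) (ρ_ b).hom
        = T.map (ρ_ a).inv (ρ_ b).hom := by rw [← hT.map_comp]; simp
    simp only [Category.assoc]
    rw [e, hT.right_unit]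
  have hW : ((d.p.tHom (𝟙 (S.obj b c)) S.η ≫ S.μ b c (𝟙_ M) (𝟙_ M))
        ≫ S.map (ρ_ b).inv (ρ_ c).hom) = d.p.rHom (S.obj b c) := by
    rw [Category.assoc, hS.right_unit]
  conv_lhs => rw [← Category.assoc, tHom_left_right hd.p_mon, hcu,
    tHom_split_right hd.p_mon, Category.assoc, cmul_comp' d hd S T hS hT hp₁ hp₂]
  conv_lhs => simp only [gmul, Category.assoc]
  conv_lhs => rw [cmap_fac d hd S T hS hT, tHom_split_right hd.p_mon, Category.assoc,
    zeta_push_right' d hd, stc' d hd, stc' d hd, hV2]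
  conv_lhs => rw [compPr_shift d hd S T hS hT _ _ (ρ_ b).hom, hU, hW,
    unit_p_right' d hd]

end CompLax



open CategoryTheory.Limits

/-- Let `V` be a cocomplete duoidal category and `M` a small monoidal category.  If
`S, T : M^op × M → V` are lax monoidal functors (for `(V, ∗, J)`), then
`(S ∘̂ T)(a,c) = ∫^b T(a,b) ∘ S(b,c)` is lax monoidal, with unit coherence
`J → Δ → J ∘ J → η_T ∘ η_S → T(e,e) ∘ S(e,e) → ∫^b T(e,b) ∘ S(b,e)` and
multiplication obtained from `ζ` followed by `μ_T ∘ μ_S` and the canonical coend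
map. -/
theorem comp_lax_monoidal {V : Type u₁} [Category.{v₁} V] [HasColimits V]
    {M : Type v₁} [Category.{v₁} M] [MonoidalCategory M]
    (d : DuoidalData V) (hd : IsDuoidal d)
    (hp₁ : ∀ X : V, PreservesColimits (tLeft d.p hd.p_mon X))
    (hp₂ : ∀ X : V, PreservesColimits (tRight d.p hd.p_mon X))
    (hs₁ : ∀ X : V, PreservesColimits (tLeft d.s hd.s_mon X))
    (hs₂ : ∀ X : V, PreservesColimits (tRight d.s hd.s_mon X))
    (S T : LaxMonData d.p M) (hS : IsLaxMon S) (hT : IsLaxMon T) :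
    ∃ (mapST : ∀ {a a' c c' : M}, (a' ⟶ a) → (c ⟶ c') →
        (compObj d S T a c ⟶ compObj d S T a' c'))
      (η : d.p.unit ⟶ compObj d S T (𝟙_ M) (𝟙_ M))
      (μ : ∀ a₁ c₁ a₂ c₂ : M,
        d.p.t (compObj d S T a₁ c₁) (compObj d S T a₂ c₂)
          ⟶ compObj d S T (a₁ ⊗ a₂) (c₁ ⊗ c₂)),
      IsLaxMon ⟨compObj d S T, fun {a a' c c'} f g => mapST f g, η, μ⟩ ∧
      -- the functorial action is the canonical one on the coend
      (∀ {a a' c c' : M} (f : a' ⟶ a) (g : c ⟶ c') (b : M),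
        compPr d S T a c b ≫ mapST f g
          = d.s.tHom (T.map f (𝟙 b)) (S.map (𝟙 b) g) ≫ compPr d S T a' c' b) ∧
      -- the unit coherence
      η = d.delta ≫ d.s.tHom T.η S.η ≫ compPr d S T (𝟙_ M) (𝟙_ M) (𝟙_ M) ∧
      -- the multiplication, componentwise on the coend
      (∀ (a₁ c₁ a₂ c₂ b₁ b₂ : M),
        d.p.tHom (compPr d S T a₁ c₁ b₁) (compPr d S T a₂ c₂ b₂) ≫ μ a₁ c₁ a₂ c₂
          = d.zeta (T.obj a₁ b₁) (S.obj b₁ c₁) (T.obj a₂ b₂) (S.obj b₂ c₂)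
              ≫ d.s.tHom (T.μ a₁ b₁ a₂ b₂) (S.μ b₁ c₁ b₂ c₂)
              ≫ compPr d S T (a₁ ⊗ a₂) (c₁ ⊗ c₂) (b₁ ⊗ b₂)) := by
  refine ⟨fun {a a' c c'} f g => cmap d hd S T hS hT f g, cunit d S T,
    fun a₁ c₁ a₂ c₂ => cmul d hd S T hS hT hp₁ hp₂ a₁ c₁ a₂ c₂, ?_, ?_, rfl, ?_⟩
  · exact {
      map_id := fun a b => ax_map_id d hd S T hS hT a b
      map_comp := fun f f' g g' => ax_map_comp d hd S T hS hT f f' g g'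
      μ_nat := fun f₁ g₁ f₂ g₂ => ax_mu_nat d hd S T hS hT hp₁ hp₂ f₁ g₁ f₂ g₂
      assoc := fun a₁ b₁ a₂ b₂ a₃ b₃ => ax_assoc d hd S T hS hT hp₁ hp₂ a₁ b₁ a₂ b₂ a₃ b₃
      left_unit := fun a b => ax_left_unit d hd S T hS hT hp₁ hp₂ a b
      right_unit := fun a b => ax_right_unit d hd S T hS hT hp₁ hp₂ a b }
  · exact fun {a a' c c'} f g b => cmap_fac d hd S T hS hT f g b
  · exact fun a₁ c₁ a₂ c₂ b₁ b₂ => cmul_comp d hd S T hS hT hp₁ hp₂ a₁ c₁ a₂ c₂ b₁ b₂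
end

section
/- In any V-Freyd category C over a monoidal category (M, ⊕, e), the unitors of the *-structure of V respect zero and par; explicitly (writing composition right-to-left and with the *-unitor isomorphisms λ, ρ of V oriented so that the composites typecheck): id = (par ∘ par) . ζ . (id * ((zero ∘ zero) . Δ)) . ρ, and id = (par ∘ par) . ζ . (((zero ∘ zero) . Δ) * id) . λ. -/
set_option linter.unusedVariables false
open CategoryTheory CategoryTheory.Limits MonoidalCategory

universe w v u v₁ u₁ v₂ u₂ v₃ u₃

/-- The data of a `V`-Freyd category over a monoidal category `M`,
relative to duoidal data `d` on `V`. -/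
structure VFreydData {V : Type u₁} [Category.{v₁} V] (d : DuoidalData V)
    (M : Type u₂) [Category.{v₂} M] [MonoidalCategory M] where
  obj : M → M → V
  map : ∀ {a a' b b' : M}, (a' ⟶ a) → (b ⟶ b') → (obj a b ⟶ obj a' b')
  idt : ∀ a : M, d.s.unit ⟶ obj a a
  seq : ∀ a b c : M, d.s.t (obj a b) (obj b c) ⟶ obj a c
  zero : d.p.unit ⟶ obj (𝟙_ M) (𝟙_ M)
  par : ∀ a₁ b₁ a₂ b₂ : M, d.p.t (obj a₁ b₁) (obj a₂ b₂) ⟶ obj (a₁ ⊗ a₂) (b₁ ⊗ b₂)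

/-- The data of a `V`-Freyd category is an actual `V`-Freyd category:
bifunctoriality, (extra)naturality of the structure maps, and the eight axioms. -/
structure IsVFreyd {V : Type u₁} [Category.{v₁} V] {d : DuoidalData V}
    {M : Type u₂} [Category.{v₂} M] [MonoidalCategory M] (C : VFreydData d M) : Prop where
  map_id : ∀ a b : M, C.map (𝟙 a) (𝟙 b) = 𝟙 (C.obj a b)
  map_comp : ∀ {a a' a'' b b' b'' : M} (f : a' ⟶ a) (f' : a'' ⟶ a') (g : b ⟶ b') (g' : b' ⟶ b''),
    C.map (f' ≫ f) (g ≫ g') = C.map f g ≫ C.map f' g'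
  idt_extra : ∀ {a b : M} (f : a ⟶ b),
    C.idt a ≫ C.map (𝟙 a) f = C.idt b ≫ C.map f (𝟙 b)
  seq_nat : ∀ {a a' c c' : M} (f : a' ⟶ a) (g : c ⟶ c') (b : M),
    d.s.tHom (C.map f (𝟙 b)) (C.map (𝟙 b) g) ≫ C.seq a' b c' = C.seq a b c ≫ C.map f g
  seq_extra : ∀ {b b' : M} (f : b ⟶ b') (a c : M),
    d.s.tHom (C.map (𝟙 a) f) (𝟙 (C.obj b' c)) ≫ C.seq a b' c
      = d.s.tHom (𝟙 (C.obj a b)) (C.map f (𝟙 c)) ≫ C.seq a b c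
  par_nat : ∀ {a₁ a₁' b₁ b₁' a₂ a₂' b₂ b₂' : M}
    (f₁ : a₁' ⟶ a₁) (g₁ : b₁ ⟶ b₁') (f₂ : a₂' ⟶ a₂) (g₂ : b₂ ⟶ b₂'),
    d.p.tHom (C.map f₁ g₁) (C.map f₂ g₂) ≫ C.par a₁' b₁' a₂' b₂'
      = C.par a₁ b₁ a₂ b₂ ≫ C.map (f₁ ⊗ₘ f₂) (g₁ ⊗ₘ g₂)
  -- (i) idt is the identity for seq
  idt_seq : ∀ a b : M,
    d.s.tHom (C.idt a) (𝟙 (C.obj a b)) ≫ C.seq a a b = d.s.lHom (C.obj a b)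
  seq_idt : ∀ a b : M,
    d.s.tHom (𝟙 (C.obj a b)) (C.idt b) ≫ C.seq a b b = d.s.rHom (C.obj a b)
  -- (ii) seq is associative
  seq_assoc : ∀ a b c e : M,
    d.s.tHom (C.seq a b c) (𝟙 (C.obj c e)) ≫ C.seq a c e
      = d.s.aHom (C.obj a b) (C.obj b c) (C.obj c e)
          ≫ d.s.tHom (𝟙 (C.obj a b)) (C.seq b c e) ≫ C.seq a b e
  -- (iii) zero is the identity for par
  zero_par : ∀ a b : M,
    d.p.tHom C.zero (𝟙 (C.obj a b)) ≫ C.par (𝟙_ M) (𝟙_ M) a b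
        ≫ C.map (λ_ a).inv (λ_ b).hom
      = d.p.lHom (C.obj a b)
  par_zero : ∀ a b : M,
    d.p.tHom (𝟙 (C.obj a b)) C.zero ≫ C.par a b (𝟙_ M) (𝟙_ M)
        ≫ C.map (ρ_ a).inv (ρ_ b).hom
      = d.p.rHom (C.obj a b)
  -- (iv) par is associative
  par_assoc : ∀ a₁ b₁ a₂ b₂ a₃ b₃ : M,
    d.p.tHom (C.par a₁ b₁ a₂ b₂) (𝟙 (C.obj a₃ b₃)) ≫ C.par (a₁ ⊗ a₂) (b₁ ⊗ b₂) a₃ b₃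
        ≫ C.map (α_ a₁ a₂ a₃).inv (α_ b₁ b₂ b₃).hom
      = d.p.aHom (C.obj a₁ b₁) (C.obj a₂ b₂) (C.obj a₃ b₃)
          ≫ d.p.tHom (𝟙 (C.obj a₁ b₁)) (C.par a₂ b₂ a₃ b₃) ≫ C.par a₁ b₁ (a₂ ⊗ a₃) (b₂ ⊗ b₃)
  -- (v) idt respects zero
  idt_zero : d.eps ≫ C.idt (𝟙_ M) = C.zero
  -- (vi) idt respects par
  idt_par : ∀ a b : M,
    d.nabla ≫ C.idt (a ⊗ b) = d.p.tHom (C.idt a) (C.idt b) ≫ C.par a a b b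
  -- (vii) seq respects zero
  seq_zero : d.delta ≫ d.s.tHom C.zero C.zero ≫ C.seq (𝟙_ M) (𝟙_ M) (𝟙_ M) = C.zero
  -- (viii) seq respects par (exchange)
  exchange : ∀ a₁ b₁ c₁ a₂ b₂ c₂ : M,
    d.zeta (C.obj a₁ b₁) (C.obj b₁ c₁) (C.obj a₂ b₂) (C.obj b₂ c₂)
        ≫ d.s.tHom (C.par a₁ b₁ a₂ b₂) (C.par b₁ c₁ b₂ c₂)
        ≫ C.seq (a₁ ⊗ a₂) (b₁ ⊗ b₂) (c₁ ⊗ c₂)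
      = d.p.tHom (C.seq a₁ b₁ c₁) (C.seq a₂ b₂ c₂) ≫ C.par a₁ c₁ a₂ c₂

/-- The data of a strong monoidal functor. -/
structure StrongMonData (M : Type u₂) (M' : Type u₃) [Category.{v₂} M] [MonoidalCategory M]
    [Category.{v₃} M'] [MonoidalCategory M'] where
  T : M ⥤ M'
  εm : 𝟙_ M' ≅ T.obj (𝟙_ M)
  μm : ∀ a b : M, T.obj a ⊗ T.obj b ≅ T.obj (a ⊗ b)

/-- The data of a strong monoidal functor is an actual strong monoidal functor. -/
structure IsStrongMon {M : Type u₂} {M' : Type u₃} [Category.{v₂} M] [MonoidalCategory M]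
    [Category.{v₃} M'] [MonoidalCategory M'] (F : StrongMonData M M') : Prop where
  μ_nat : ∀ {a a' b b' : M} (f : a ⟶ a') (g : b ⟶ b'),
    (F.T.map f ⊗ₘ F.T.map g) ≫ (F.μm a' b').hom = (F.μm a b).hom ≫ F.T.map (f ⊗ₘ g)
  assoc : ∀ a b c : M,
    ((F.μm a b).hom ▷ F.T.obj c) ≫ (F.μm (a ⊗ b) c).hom ≫ F.T.map (α_ a b c).hom
      = (α_ (F.T.obj a) (F.T.obj b) (F.T.obj c)).hom ≫ (F.T.obj a ◁ (F.μm b c).hom)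
          ≫ (F.μm a (b ⊗ c)).hom
  left_unit : ∀ a : M,
    (F.εm.hom ▷ F.T.obj a) ≫ (F.μm (𝟙_ M) a).hom ≫ F.T.map (λ_ a).hom = (λ_ (F.T.obj a)).hom
  right_unit : ∀ a : M,
    (F.T.obj a ◁ F.εm.hom) ≫ (F.μm a (𝟙_ M)).hom ≫ F.T.map (ρ_ a).hom = (ρ_ (F.T.obj a)).hom

/-- A morphism of `V`-Freyd categories. -/
structure VFreydHom {V : Type u₁} [Category.{v₁} V] {d : DuoidalData V}
    {M : Type u₂} [Category.{v₂} M] [MonoidalCategory M]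
    {M' : Type u₃} [Category.{v₃} M'] [MonoidalCategory M']
    (C : VFreydData d M) (C' : VFreydData d M') where
  F₀ : StrongMonData M M'
  strong : IsStrongMon F₀
  app : ∀ a b : M, C.obj a b ⟶ C'.obj (F₀.T.obj a) (F₀.T.obj b)
  naturality : ∀ {a a' b b' : M} (f : a' ⟶ a) (g : b ⟶ b'),
    C.map f g ≫ app a' b' = app a b ≫ C'.map (F₀.T.map f) (F₀.T.map g)
  hidt : ∀ a : M, C.idt a ≫ app a a = C'.idt (F₀.T.obj a)
  hseq : ∀ a b c : M,
    C.seq a b c ≫ app a c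
      = d.s.tHom (app a b) (app b c) ≫ C'.seq (F₀.T.obj a) (F₀.T.obj b) (F₀.T.obj c)
  hpar : ∀ a₁ b₁ a₂ b₂ : M,
    d.p.tHom (app a₁ b₁) (app a₂ b₂)
        ≫ C'.par (F₀.T.obj a₁) (F₀.T.obj b₁) (F₀.T.obj a₂) (F₀.T.obj b₂)
        ≫ C'.map (𝟙 (F₀.T.obj a₁ ⊗ F₀.T.obj a₂)) (F₀.μm b₁ b₂).hom
      = C.par a₁ b₁ a₂ b₂ ≫ app (a₁ ⊗ a₂) (b₁ ⊗ b₂) ≫ C'.map (F₀.μm a₁ a₂).hom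
          (𝟙 (F₀.T.obj (b₁ ⊗ b₂)))

/-- In any `V`-Freyd category, the unitors of the `*`-structure of `V` respect `zero`
and `par`:  `id = (par ∘ par) . ζ . (id * ((zero ∘ zero) . Δ)) . ρ` and
`id = (par ∘ par) . ζ . (((zero ∘ zero) . Δ) * id) . λ` (with the unitor isomorphisms
oriented, and the suppressed transports along the unitors of `M` inserted, so that
the composites typecheck). -/
theorem par_unitors_respect_zero_par {V : Type u₁} [Category.{v₁} V]
    {d : DuoidalData V} {M : Type u₂} [Category.{v₂} M] [MonoidalCategory M]
    (hd : IsDuoidal d) (C : VFreydData d M) (hC : IsVFreyd C) :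
    (∀ a b c : M,
      𝟙 (d.s.t (C.obj a b) (C.obj b c))
        = d.p.rInv (d.s.t (C.obj a b) (C.obj b c))
          ≫ d.p.tHom (𝟙 (d.s.t (C.obj a b) (C.obj b c)))
              (d.delta ≫ d.s.tHom C.zero C.zero)
          ≫ d.zeta (C.obj a b) (C.obj b c) (C.obj (𝟙_ M) (𝟙_ M)) (C.obj (𝟙_ M) (𝟙_ M))
          ≫ d.s.tHom (C.par a b (𝟙_ M) (𝟙_ M) ≫ C.map (ρ_ a).inv (ρ_ b).hom)
              (C.par b c (𝟙_ M) (𝟙_ M) ≫ C.map (ρ_ b).inv (ρ_ c).hom)) ∧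
    (∀ a b c : M,
      𝟙 (d.s.t (C.obj a b) (C.obj b c))
        = d.p.lInv (d.s.t (C.obj a b) (C.obj b c))
          ≫ d.p.tHom (d.delta ≫ d.s.tHom C.zero C.zero)
              (𝟙 (d.s.t (C.obj a b) (C.obj b c)))
          ≫ d.zeta (C.obj (𝟙_ M) (𝟙_ M)) (C.obj (𝟙_ M) (𝟙_ M)) (C.obj a b) (C.obj b c)
          ≫ d.s.tHom (C.par (𝟙_ M) (𝟙_ M) a b ≫ C.map (λ_ a).inv (λ_ b).hom)
              (C.par (𝟙_ M) (𝟙_ M) b c ≫ C.map (λ_ b).inv (λ_ c).hom)) := by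
  constructor
  · intro a b c
    symm
    have hsplit : d.p.tHom (𝟙 (d.s.t (C.obj a b) (C.obj b c))) (d.delta ≫ d.s.tHom C.zero C.zero)
        = d.p.tHom (𝟙 (d.s.t (C.obj a b) (C.obj b c))) d.delta
          ≫ d.p.tHom (d.s.tHom (𝟙 (C.obj a b)) (𝟙 (C.obj b c))) (d.s.tHom C.zero C.zero) := by
      rw [← hd.p_mon.tHom_comp, hd.s_mon.tHom_id, Category.id_comp]
    rw [hsplit]
    slice_lhs 3 4 => rw [hd.zeta_nat (𝟙 (C.obj a b)) (𝟙 (C.obj b c)) C.zero C.zero]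
    have hmerge : d.s.tHom (d.p.tHom (𝟙 (C.obj a b)) C.zero) (d.p.tHom (𝟙 (C.obj b c)) C.zero)
        ≫ d.s.tHom (C.par a b (𝟙_ M) (𝟙_ M) ≫ C.map (ρ_ a).inv (ρ_ b).hom)
            (C.par b c (𝟙_ M) (𝟙_ M) ≫ C.map (ρ_ b).inv (ρ_ c).hom)
        = d.s.tHom (d.p.rHom (C.obj a b)) (d.p.rHom (C.obj b c)) := by
      rw [← hd.s_mon.tHom_comp]
      rw [hC.par_zero, hC.par_zero]
    slice_lhs 4 5 => rw [hmerge]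
    slice_lhs 2 4 => rw [hd.unit_p_right]
    rw [hd.p_mon.r_inv_hom]
  · intro a b c
    symm
    have hsplit : d.p.tHom (d.delta ≫ d.s.tHom C.zero C.zero) (𝟙 (d.s.t (C.obj a b) (C.obj b c)))
        = d.p.tHom d.delta (𝟙 (d.s.t (C.obj a b) (C.obj b c)))
          ≫ d.p.tHom (d.s.tHom C.zero C.zero) (d.s.tHom (𝟙 (C.obj a b)) (𝟙 (C.obj b c))) := by
      rw [← hd.p_mon.tHom_comp, hd.s_mon.tHom_id, Category.id_comp]
    rw [hsplit]
    slice_lhs 3 4 => rw [hd.zeta_nat C.zero C.zero (𝟙 (C.obj a b)) (𝟙 (C.obj b c))]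
    have hmerge : d.s.tHom (d.p.tHom C.zero (𝟙 (C.obj a b))) (d.p.tHom C.zero (𝟙 (C.obj b c)))
        ≫ d.s.tHom (C.par (𝟙_ M) (𝟙_ M) a b ≫ C.map (λ_ a).inv (λ_ b).hom)
            (C.par (𝟙_ M) (𝟙_ M) b c ≫ C.map (λ_ b).inv (λ_ c).hom)
        = d.s.tHom (d.p.lHom (C.obj a b)) (d.p.lHom (C.obj b c)) := by
      rw [← hd.s_mon.tHom_comp]
      rw [hC.zero_par, hC.zero_par]
    slice_lhs 4 5 => rw [hmerge]
    slice_lhs 2 4 => rw [hd.unit_p_left]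
    rw [hd.p_mon.l_inv_hom]
end

section
/- Let F : V → W be a double lax monoidal functor between duoidal categories. For every V-Freyd category C : M^op × M → V over a monoidal category (M, ⊕, e), the data F̄(C)(a,b) := F(C(a,b)) with structure maps idt_F := F(idt) . η_∘, seq_F := F(seq) . μ_∘, zero_F := F(zero) . η_*, and par_F := F(par) . μ_* is a W-Freyd category over M; and sending a morphism G = (G₀, G₁) of V-Freyd categories to F̄(G) := (G₀, F G₁) makes F̄ a functor V-Freyd → W-Freyd. -/
set_option linter.unusedVariables false
open CategoryTheory CategoryTheory.Limits MonoidalCategory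

universe w v u v₁ u₁ v₂ u₂ v₃ u₃

/-- The data of a double lax monoidal functor between duoidal categories: lax
monoidal coherence data for both the `∗`- and the `∘`-structures. -/
structure DoubleLaxData {V : Type u₁} [Category.{v₁} V] {W : Type u₂} [Category.{v₂} W]
    (d : DuoidalData V) (d' : DuoidalData W) (F : V ⥤ W) where
  ηp : d'.p.unit ⟶ F.obj d.p.unit
  μp : ∀ X Y : V, d'.p.t (F.obj X) (F.obj Y) ⟶ F.obj (d.p.t X Y)
  ηs : d'.s.unit ⟶ F.obj d.s.unit
  μs : ∀ X Y : V, d'.s.t (F.obj X) (F.obj Y) ⟶ F.obj (d.s.t X Y)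

/-- The data of a double lax monoidal functor is an actual double lax monoidal
functor: both lax monoidal structures are coherent, and they are compatible with
`ζ`, `ε`, `Δ` and `∇`. -/
structure IsDoubleLax {V : Type u₁} [Category.{v₁} V] {W : Type u₂} [Category.{v₂} W]
    {d : DuoidalData V} {d' : DuoidalData W} {F : V ⥤ W}
    (L : DoubleLaxData d d' F) : Prop where
  μp_nat : ∀ {X X' Y Y' : V} (f : X ⟶ X') (g : Y ⟶ Y'),
    d'.p.tHom (F.map f) (F.map g) ≫ L.μp X' Y' = L.μp X Y ≫ F.map (d.p.tHom f g)
  μs_nat : ∀ {X X' Y Y' : V} (f : X ⟶ X') (g : Y ⟶ Y'),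
    d'.s.tHom (F.map f) (F.map g) ≫ L.μs X' Y' = L.μs X Y ≫ F.map (d.s.tHom f g)
  p_assoc : ∀ X Y Z : V,
    d'.p.tHom (L.μp X Y) (𝟙 (F.obj Z)) ≫ L.μp (d.p.t X Y) Z ≫ F.map (d.p.aHom X Y Z)
      = d'.p.aHom (F.obj X) (F.obj Y) (F.obj Z)
          ≫ d'.p.tHom (𝟙 (F.obj X)) (L.μp Y Z) ≫ L.μp X (d.p.t Y Z)
  p_left : ∀ X : V,
    d'.p.tHom L.ηp (𝟙 (F.obj X)) ≫ L.μp d.p.unit X ≫ F.map (d.p.lHom X)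
      = d'.p.lHom (F.obj X)
  p_right : ∀ X : V,
    d'.p.tHom (𝟙 (F.obj X)) L.ηp ≫ L.μp X d.p.unit ≫ F.map (d.p.rHom X)
      = d'.p.rHom (F.obj X)
  s_assoc : ∀ X Y Z : V,
    d'.s.tHom (L.μs X Y) (𝟙 (F.obj Z)) ≫ L.μs (d.s.t X Y) Z ≫ F.map (d.s.aHom X Y Z)
      = d'.s.aHom (F.obj X) (F.obj Y) (F.obj Z)
          ≫ d'.s.tHom (𝟙 (F.obj X)) (L.μs Y Z) ≫ L.μs X (d.s.t Y Z)
  s_left : ∀ X : V,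
    d'.s.tHom L.ηs (𝟙 (F.obj X)) ≫ L.μs d.s.unit X ≫ F.map (d.s.lHom X)
      = d'.s.lHom (F.obj X)
  s_right : ∀ X : V,
    d'.s.tHom (𝟙 (F.obj X)) L.ηs ≫ L.μs X d.s.unit ≫ F.map (d.s.rHom X)
      = d'.s.rHom (F.obj X)
  comp_zeta : ∀ A B C D : V,
    d'.p.tHom (L.μs A B) (L.μs C D) ≫ L.μp (d.s.t A B) (d.s.t C D)
        ≫ F.map (d.zeta A B C D)
      = d'.zeta (F.obj A) (F.obj B) (F.obj C) (F.obj D)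
          ≫ d'.s.tHom (L.μp A C) (L.μp B D) ≫ L.μs (d.p.t A C) (d.p.t B D)
  comp_eps : d'.eps ≫ L.ηs = L.ηp ≫ F.map d.eps
  comp_delta : d'.delta ≫ d'.s.tHom L.ηp L.ηp ≫ L.μs d.p.unit d.p.unit
      = L.ηp ≫ F.map d.delta
  comp_nabla : d'.nabla ≫ L.ηs
      = d'.p.tHom L.ηs L.ηs ≫ L.μp d.s.unit d.s.unit ≫ F.map d.nabla

/-- Change of enrichment: the image of a `V`-Freyd category under a double lax
monoidal functor `F : V → W`, with `idt_F = F(idt) . η_∘`, `seq_F = F(seq) . μ_∘`,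
`zero_F = F(zero) . η_*` and `par_F = F(par) . μ_*`. -/
def pushVFreyd {V : Type u₁} [Category.{v₁} V] {W : Type u₂} [Category.{v₂} W]
    {d : DuoidalData V} {d' : DuoidalData W} {F : V ⥤ W} (L : DoubleLaxData d d' F)
    {M : Type u₃} [Category.{v₃} M] [MonoidalCategory M] (C : VFreydData d M) :
    VFreydData d' M where
  obj a b := F.obj (C.obj a b)
  map f g := F.map (C.map f g)
  idt a := L.ηs ≫ F.map (C.idt a)
  seq a b c := L.μs (C.obj a b) (C.obj b c) ≫ F.map (C.seq a b c)
  zero := L.ηp ≫ F.map C.zero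
  par a₁ b₁ a₂ b₂ := L.μp (C.obj a₁ b₁) (C.obj a₂ b₂) ≫ F.map (C.par a₁ b₁ a₂ b₂)

/-- Change of enrichment along a double lax monoidal functor `F : V → W`: for every
`V`-Freyd category `C` over `M`, the data `F̄(C)(a,b) = F(C(a,b))` with
`idt_F = F(idt) . η_∘`, `seq_F = F(seq) . μ_∘`, `zero_F = F(zero) . η_*`,
`par_F = F(par) . μ_*` is a `W`-Freyd category over `M`, and
`F̄(G₀, G₁) = (G₀, F G₁)` makes `F̄` a functor `V-Freyd → W-Freyd`. -/
theorem pushVFreyd_functor {V : Type u₁} [Category.{v₁} V] {W : Type u₂}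
    [Category.{v₂} W] {d : DuoidalData V} {d' : DuoidalData W} {F : V ⥤ W}
    (L : DoubleLaxData d d' F) (hd : IsDuoidal d) (hd' : IsDuoidal d')
    (hL : IsDoubleLax L) :
    (∀ {M : Type u₃} [Category.{v₃} M] [MonoidalCategory M]
      (C : VFreydData d M), IsVFreyd C → IsVFreyd (pushVFreyd L C)) ∧
    (∀ {M : Type u₃} {M' : Type w} [Category.{v₃} M] [MonoidalCategory M]
      [Category.{v}  M'] [MonoidalCategory M']
      (C : VFreydData d M) (C' : VFreydData d M') (hC : IsVFreyd C)
      (hC' : IsVFreyd C') (G : VFreydHom C C'),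
      ∃ G' : VFreydHom (pushVFreyd L C) (pushVFreyd L C'),
        G'.F₀ = G.F₀ ∧ ∀ a b : M, HEq (G'.app a b) (F.map (G.app a b))) := by
  constructor
  · intro M _ _ C hC
    have hp' := hd'.p_mon
    have hs' := hd'.s_mon
    -- helper: μ-naturality with one identity leg
    have μsL : ∀ {X X' : V} (Y : V) (f : X ⟶ X'),
        d'.s.tHom (F.map f) (𝟙 (F.obj Y)) ≫ L.μs X' Y
          = L.μs X Y ≫ F.map (d.s.tHom f (𝟙 Y)) := by
      intro X X' Y f
      have := hL.μs_nat f (𝟙 Y); rw [F.map_id] at this; exact this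
    have μsR : ∀ {Y Y' : V} (X : V) (g : Y ⟶ Y'),
        d'.s.tHom (𝟙 (F.obj X)) (F.map g) ≫ L.μs X Y'
          = L.μs X Y ≫ F.map (d.s.tHom (𝟙 X) g) := by
      intro Y Y' X g
      have := hL.μs_nat (𝟙 X) g; rw [F.map_id] at this; exact this
    have μpL : ∀ {X X' : V} (Y : V) (f : X ⟶ X'),
        d'.p.tHom (F.map f) (𝟙 (F.obj Y)) ≫ L.μp X' Y
          = L.μp X Y ≫ F.map (d.p.tHom f (𝟙 Y)) := by
      intro X X' Y f
      have := hL.μp_nat f (𝟙 Y); rw [F.map_id] at this; exact this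
    have μpR : ∀ {Y Y' : V} (X : V) (g : Y ⟶ Y'),
        d'.p.tHom (𝟙 (F.obj X)) (F.map g) ≫ L.μp X Y'
          = L.μp X Y ≫ F.map (d.p.tHom (𝟙 X) g) := by
      intro Y Y' X g
      have := hL.μp_nat (𝟙 X) g; rw [F.map_id] at this; exact this
    -- helper: splitting tHom with identity legs
    have sSplitL : ∀ {X Y Z W : W} (f : X ⟶ Y) (g : Y ⟶ Z),
        d'.s.tHom (f ≫ g) (𝟙 W) = d'.s.tHom f (𝟙 W) ≫ d'.s.tHom g (𝟙 W) := by
      intro X Y Z W f g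
      rw [← hs'.tHom_comp, Category.comp_id]
    have sSplitR : ∀ {X Y Z W : W} (f : X ⟶ Y) (g : Y ⟶ Z),
        d'.s.tHom (𝟙 W) (f ≫ g) = d'.s.tHom (𝟙 W) f ≫ d'.s.tHom (𝟙 W) g := by
      intro X Y Z W f g
      rw [← hs'.tHom_comp, Category.comp_id]
    have pSplitL : ∀ {X Y Z W : W} (f : X ⟶ Y) (g : Y ⟶ Z),
        d'.p.tHom (f ≫ g) (𝟙 W) = d'.p.tHom f (𝟙 W) ≫ d'.p.tHom g (𝟙 W) := by
      intro X Y Z W f g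
      rw [← hp'.tHom_comp, Category.comp_id]
    have pSplitR : ∀ {X Y Z W : W} (f : X ⟶ Y) (g : Y ⟶ Z),
        d'.p.tHom (𝟙 W) (f ≫ g) = d'.p.tHom (𝟙 W) f ≫ d'.p.tHom (𝟙 W) g := by
      intro X Y Z W f g
      rw [← hp'.tHom_comp, Category.comp_id]
    constructor
    case map_id =>
      intro a b
      simp only [pushVFreyd, hC.map_id, F.map_id]
    case map_comp =>
      intro a a' a'' b b' b'' f f' g g'
      simp only [pushVFreyd, hC.map_comp, F.map_comp]
    case idt_extra =>
      intro a b f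
      simp only [pushVFreyd, Category.assoc, ← F.map_comp, hC.idt_extra]
    case seq_nat =>
      intro a a' c c' f g b
      simp only [pushVFreyd]
      rw [← Category.assoc, hL.μs_nat, Category.assoc, ← F.map_comp, hC.seq_nat,
        F.map_comp, Category.assoc]
    case seq_extra =>
      intro b b' f a c
      simp only [pushVFreyd]
      rw [← Category.assoc, ← Category.assoc, μsL, μsR, Category.assoc, Category.assoc,
        ← F.map_comp, ← F.map_comp, hC.seq_extra]
    case par_nat =>
      intro a₁ a₁' b₁ b₁' a₂ a₂' b₂ b₂' f₁ g₁ f₂ g₂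
      simp only [pushVFreyd]
      rw [← Category.assoc, hL.μp_nat, Category.assoc, ← F.map_comp, hC.par_nat,
        F.map_comp, Category.assoc]
    case idt_seq =>
      intro a b
      simp only [pushVFreyd]
      rw [sSplitL, Category.assoc]
      slice_lhs 2 3 => rw [μsL]
      slice_lhs 3 4 => rw [← F.map_comp, hC.idt_seq]
      simpa only [Category.assoc] using hL.s_left (C.obj a b)
    case seq_idt =>
      intro a b
      simp only [pushVFreyd]
      rw [sSplitR, Category.assoc]
      slice_lhs 2 3 => rw [μsR]
      slice_lhs 3 4 => rw [← F.map_comp, hC.seq_idt]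
      simpa only [Category.assoc] using hL.s_right (C.obj a b)
    case seq_assoc =>
      intro a b c e
      simp only [pushVFreyd]
      rw [sSplitL, Category.assoc]
      slice_lhs 2 3 => rw [μsL]
      slice_lhs 3 4 => rw [← F.map_comp, hC.seq_assoc]
      rw [F.map_comp, F.map_comp]
      slice_lhs 1 3 => rw [hL.s_assoc]
      slice_lhs 3 4 => rw [← μsR]
      slice_lhs 2 3 => rw [← sSplitR]
      simp only [Category.assoc]
    case zero_par =>
      intro a b
      simp only [pushVFreyd]
      rw [pSplitL, Category.assoc]
      slice_lhs 2 3 => rw [μpL]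
      slice_lhs 3 5 => rw [← F.map_comp, ← F.map_comp, hC.zero_par]
      simpa only [Category.assoc] using hL.p_left (C.obj a b)
    case par_zero =>
      intro a b
      simp only [pushVFreyd]
      rw [pSplitR, Category.assoc]
      slice_lhs 2 3 => rw [μpR]
      slice_lhs 3 5 => rw [← F.map_comp, ← F.map_comp, hC.par_zero]
      simpa only [Category.assoc] using hL.p_right (C.obj a b)
    case par_assoc =>
      intro a₁ b₁ a₂ b₂ a₃ b₃
      simp only [pushVFreyd]
      rw [pSplitL, Category.assoc]
      slice_lhs 2 3 => rw [μpL]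
      slice_lhs 3 5 => rw [← F.map_comp, ← F.map_comp, hC.par_assoc]
      rw [F.map_comp, F.map_comp]
      slice_lhs 1 3 => rw [hL.p_assoc]
      slice_lhs 3 4 => rw [← μpR]
      slice_lhs 2 3 => rw [← pSplitR]
      simp only [Category.assoc]
    case idt_zero =>
      simp only [pushVFreyd]
      rw [← Category.assoc, hL.comp_eps, Category.assoc, ← F.map_comp, hC.idt_zero]
    case idt_par =>
      intro a b
      simp only [pushVFreyd]
      rw [← Category.assoc, hL.comp_nabla]
      slice_lhs 3 4 => rw [← F.map_comp, hC.idt_par]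
      rw [F.map_comp]
      slice_lhs 2 3 => rw [← hL.μp_nat]
      slice_lhs 1 2 => rw [← hp'.tHom_comp]
      simp only [Category.assoc]
    case seq_zero =>
      simp only [pushVFreyd]
      rw [hs'.tHom_comp]
      slice_lhs 3 4 => rw [hL.μs_nat]
      slice_lhs 1 3 => rw [hL.comp_delta]
      slice_lhs 2 4 => rw [← F.map_comp, ← F.map_comp, hC.seq_zero]
    case exchange =>
      intro a₁ b₁ c₁ a₂ b₂ c₂
      simp only [pushVFreyd]
      rw [hs'.tHom_comp]
      slice_lhs 3 4 => rw [hL.μs_nat]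
      slice_lhs 1 3 => rw [← hL.comp_zeta]
      slice_lhs 3 5 => rw [← F.map_comp, ← F.map_comp, hC.exchange]
      rw [F.map_comp]
      slice_lhs 2 3 => rw [← hL.μp_nat]
      slice_lhs 1 2 => rw [← hp'.tHom_comp]
      simp only [Category.assoc]
  · intro M M' _ _ _ _ C C' hC hC' G
    refine ⟨{ F₀ := G.F₀, strong := G.strong,
              app := fun a b => F.map (G.app a b),
              naturality := ?_, hidt := ?_, hseq := ?_, hpar := ?_ }, rfl,
            fun a b => HEq.refl _⟩
    · intro a a' b b' f g
      simp only [pushVFreyd, ← F.map_comp, G.naturality]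
    · intro a
      simp only [pushVFreyd, Category.assoc, ← F.map_comp, G.hidt]
    · intro a b c
      simp only [pushVFreyd]
      rw [Category.assoc, ← F.map_comp, G.hseq, F.map_comp]
      slice_lhs 1 2 => rw [← hL.μs_nat]
      simp only [Category.assoc]
    · intro a₁ b₁ a₂ b₂
      simp only [pushVFreyd, Category.assoc]
      slice_lhs 1 2 => rw [hL.μp_nat]
      slice_lhs 2 4 => rw [← F.map_comp, ← F.map_comp, G.hpar a₁ b₁ a₂ b₂]
      simp only [F.map_comp, Category.assoc]
end
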